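/- arXiv:1406.3283 — 4 statements merged into one kernel-verified Lean document; each statement's English description precedes it below -/
import Mathlib

section
/- For almost every t ∈ ℝ: for every ε > 0 there exists K ∈ ℕ such that for all k ≥ K one has q_{k+1}(t) ≤ q_k(t)^{1+ε}, where q₁(t) < q₂(t) < ⋯ is the increasing enumeration of the set Q(t) = { q ∈ ℤ, q ≥ 1 : ∃ a ∈ ℤ with |t/(2π) − a/q| ≤ 1/q² } (which is infinite for almost every t). -/
/-! Almost every `x = t / (2π)` is irrational and is not Liouville with any exponent `p > 2`.
Let `A < B` be consecutive Dirichlet denominators of such an `x`. Dirichlet's theorem with bound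
`B` gives `a / d` with `d < B` and `|x - a / d| ≤ 1 / (d B)`; then `d` is itself a Dirichlet
denominator, so `d ≤ A`. If `B > A ^ (1 + ε)`, then `|x - a / d| < 1 / d ^ (2 + ε)`, which bounds `d`
since `x` is not Liouville with exponent `2 + ε`. But rationals of bounded denominator keep a
positive distance from the irrational `x`, contradicting `|x - a / d| ≤ 1 / B` once `B` is large. -/

open Filter MeasureTheory

/-- The set of positive integer denominators `q` for which the Dirichlet condition
`|t/(2π) - a/q| ≤ 1/q²` holds for some integer `a`. -/
def dirichletSet (t : ℝ) : Set ℕ :=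
  {q : ℕ | 1 ≤ q ∧ ∃ a : ℤ, |t / (2 * Real.pi) - (a : ℝ) / (q : ℝ)| ≤ 1 / (q : ℝ) ^ 2}

def dirichletDenoms (x : ℝ) : Set ℕ :=
  {q : ℕ | 1 ≤ q ∧ ∃ a : ℤ, |x - (a : ℝ) / (q : ℝ)| ≤ 1 / (q : ℝ) ^ 2}

lemma Rat.den_mem_dirichletDenoms {x : ℝ} {q : ℚ} (h : |x - q| ≤ 1 / (q.den : ℝ) ^ 2) :
    q.den ∈ dirichletDenoms x :=
  ⟨q.pos, q.num, by rwa [← Rat.cast_def]⟩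

lemma exists_rat_den_mem_dirichletDenoms (x : ℝ) {N : ℕ} (hN : 1 < N) :
    ∃ q : ℚ, q.den ∈ dirichletDenoms x ∧ q.den < N ∧ |x - q| ≤ 1 / (q.den * N) := by
  obtain ⟨q, hq, hden⟩ := Real.exists_rat_abs_sub_le_and_den_le x (n := N - 1) (by omega)
  have hN_cast : ((N - 1 : ℕ) : ℝ) + 1 = N := by
    rw [Nat.cast_sub hN.le]; ring
  rw [hN_cast, mul_comm] at hq
  refine ⟨q, Rat.den_mem_dirichletDenoms (hq.trans ?_), by omega, hq⟩
  have hden_le : (q.den : ℝ) ≤ N := by exact_mod_cast (by omega : q.den ≤ N)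
  rw [sq]
  gcongr

lemma Rat.one_div_den_mul_le_one_div (q : ℚ) {N : ℝ} (hN : 0 < N) :
    1 / (q.den * N) ≤ 1 / N :=
  div_le_div_of_nonneg_left zero_le_one hN (le_mul_of_one_le_left hN.le (by exact_mod_cast q.pos))

lemma Irrational.eventually_den_gt {x : ℝ} (hx : Irrational x) (D : ℕ) :
    ∀ᶠ N : ℕ in atTop, ∀ q : ℚ, |x - q| ≤ 1 / N → D < q.den := by
  obtain ⟨δ, hδx, hδ⟩ := (((hx.eventually_forall_le_dist_cast_rat_of_den_le D).filter_mono
    nhdsWithin_le_nhds).and (self_mem_nhdsWithin (s := Set.Ioi 0))).exists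
  filter_upwards [tendsto_natCast_atTop_atTop.eventually_gt_atTop δ⁻¹] with N hN q hq
  by_contra! hden
  have hfar := hδx q hden
  have hclose : 1 / (N : ℝ) < δ := by rw [one_div]; exact inv_lt_of_inv_lt₀ hδ hN
  rw [Real.dist_eq] at hfar
  linarith

lemma dirichletDenoms_infinite {x : ℝ} (hx : Irrational x) : (dirichletDenoms x).Infinite := by
  refine Set.infinite_of_forall_exists_gt fun D => ?_
  obtain ⟨N, hND, hN⟩ := ((hx.eventually_den_gt D).and (eventually_ge_atTop 2)).exists
  obtain ⟨q, hqQ, -, hq⟩ := exists_rat_den_mem_dirichletDenoms x hN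
  exact ⟨q.den, hqQ, hND q (hq.trans (q.one_div_den_mul_le_one_div (Nat.cast_pos.2 (by omega))))⟩

lemma exists_den_lt_of_not_liouvilleWith {x p : ℝ} (hx : Irrational x) (h : ¬LiouvilleWith p x) :
    ∃ D : ℕ, ∀ q : ℚ, |x - q| < 1 / (q.den : ℝ) ^ p → q.den < D := by
  simp only [LiouvilleWith, not_exists, not_frequently, not_and, not_lt] at h
  obtain ⟨D, hD⟩ := eventually_atTop.1 (h 1)
  refine ⟨D, fun q hq => ?_⟩
  by_contra! hqD
  have hne : x ≠ q.num / q.den := by rw [← Rat.cast_def]; exact hx.ne_rat q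
  have hfar := hD q.den hqD q.num hne
  rw [← Rat.cast_def] at hfar
  linarith

lemma nth_dirichletDenoms_succ_le_rpow {x ε : ℝ} (hx : Irrational x) (hε : 0 < ε)
    (h : ¬LiouvilleWith (2 + ε) x) :
    ∃ K : ℕ, ∀ k : ℕ, K ≤ k →
      (Nat.nth (· ∈ dirichletDenoms x) (k + 1) : ℝ) ≤
        (Nat.nth (· ∈ dirichletDenoms x) k : ℝ) ^ ((1 : ℝ) + ε) := by
  obtain ⟨D, hD⟩ := exists_den_lt_of_not_liouvilleWith hx h
  obtain ⟨K, hK⟩ := eventually_atTop.1 (hx.eventually_den_gt D)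
  refine ⟨K, fun k hk => ?_⟩
  have hinf := dirichletDenoms_infinite hx
  set A := Nat.nth (· ∈ dirichletDenoms x) k
  set B := Nat.nth (· ∈ dirichletDenoms x) (k + 1)
  have hA : 1 ≤ A := (Nat.nth_mem_of_infinite hinf k).1
  have hAB : A < B := (Nat.nth_lt_nth hinf).2 k.lt_succ_self
  have hKB : K ≤ B := hk.trans ((k.le_succ).trans ((Nat.nth_strictMono hinf).id_le _))
  obtain ⟨q, hqQ, hqB, hq⟩ := exists_rat_den_mem_dirichletDenoms x (N := B) (by omega)
  have hqA : q.den ≤ A := Nat.le_nth_of_lt_nth_succ hqB hqQ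
  by_contra! hBA
  have hd : (0 : ℝ) < q.den := by exact_mod_cast q.pos
  have hgood : |x - q| < 1 / (q.den : ℝ) ^ (2 + ε) := by
    have hdB : (q.den : ℝ) ^ (1 + ε) < B :=
      (Real.rpow_le_rpow hd.le (by exact_mod_cast hqA) (by linarith)).trans_lt hBA
    calc |x - q| ≤ 1 / (q.den * B) := hq
      _ < 1 / (q.den * (q.den : ℝ) ^ (1 + ε)) := by gcongr
      _ = 1 / (q.den : ℝ) ^ (2 + ε) := by
        rw [show (2 : ℝ) + ε = 1 + (1 + ε) by ring, Real.rpow_add hd 1 (1 + ε), Real.rpow_one]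
  have hden_gt : D < q.den :=
    hK B hKB q (hq.trans (q.one_div_den_mul_le_one_div (Nat.cast_pos.2 (by omega))))
  have hden_lt : q.den < D := hD q hgood
  omega

lemma ae_irrational_and_not_liouvilleWith :
    ∀ᵐ x : ℝ, Irrational x ∧ ∀ p > (2 : ℝ), ¬LiouvilleWith p x :=
  ((Set.countable_range ((↑) : ℚ → ℝ)).ae_notMem volume).and ae_not_liouvilleWith

lemma ae_div_const {P : ℝ → Prop} (h : ∀ᵐ x : ℝ, P x) {c : ℝ} (hc : c ≠ 0) :
    ∀ᵐ t : ℝ, P (t / c) := by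
  have hmul : Measure.QuasiMeasurePreserving (fun t : ℝ => c⁻¹ * t) volume volume := by
    refine ⟨measurable_const_mul _, ?_⟩
    rw [Real.map_volume_mul_left (inv_ne_zero hc)]
    exact Measure.smul_absolutelyContinuous
  simpa only [div_eq_inv_mul] using hmul.ae h

-- `Nat.nth` counts from `0`: `Nat.nth (· ∈ dirichletSet t) k` is `q_{k+1}(t)`.
/-- For almost every `t`, the set `Q(t)` of Dirichlet denominators is infinite and its
increasing enumeration `q₁(t) < q₂(t) < ⋯` satisfies `q_{k+1}(t) ≤ q_k(t)^{1+ε}` for all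
sufficiently large `k`.  (Here `Nat.nth (· ∈ dirichletSet t) k = q_{k+1}(t)`.) -/
theorem consecutive_denominators :
    ∀ᵐ t : ℝ, (dirichletSet t).Infinite ∧
      ∀ ε : ℝ, 0 < ε → ∃ K : ℕ, ∀ k : ℕ, K ≤ k →
        (Nat.nth (· ∈ dirichletSet t) (k + 1) : ℝ) ≤
          (Nat.nth (· ∈ dirichletSet t) k : ℝ) ^ ((1 : ℝ) + ε) := by
  filter_upwards [ae_div_const ae_irrational_and_not_liouvilleWith (c := 2 * Real.pi)
    (by positivity)] with t ⟨hirr, hL⟩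
  -- `dirichletSet t` unfolds to `dirichletDenoms (t / (2 * Real.pi))`.
  exact ⟨dirichletDenoms_infinite hirr,
    fun ε hε => nth_dirichletDenoms_succ_le_rpow hirr hε (hL _ (by linarith))⟩
end

section
/- For almost every t ∈ ℝ: for every ε > 0 there exists N₀ such that for every integer N ≥ N₀ there exist integers a and q with N ≤ q ≤ N^{1+ε} and |t/(2π) − a/q| ≤ 1/q². -/
/-!
Dirichlet's theorem with bound `Y = N^(1+ε)` gives `0 < q ≤ Y` and `a` with `|q x - a| < 1/Y`,
hence `|x - a/q| < 1/(q Y) ≤ 1/q²`. It remains to see that `q ≥ N`. If `q < N`, then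
`|q x - a| < q^(-1-ε)`. The set of `x ∈ [-n, n]` admitting such an `a` for a given `q` has
measure `O(n q^(-1-ε))`, which is summable in `q`, so by Borel–Cantelli almost every `x`
admits it only for finitely many `q`. For irrational `x`, each of these finitely many `q`
satisfies `|q x - a| ≥ 1/N` for all `a` once `N` is large, which rules out `q < N`.
-/

open Filter MeasureTheory Metric

theorem abs_sub_div_eq_abs_mul_sub_div {q : ℝ} (hq : 0 < q) (x a : ℝ) :
    |x - a / q| = |q * x - a| / q := by
  rw [← abs_of_pos hq, ← abs_div, abs_of_pos hq, sub_div, mul_div_cancel_left₀ x hq.ne']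

theorem Real.exists_nat_abs_mul_sub_lt_inv (x : ℝ) {Y : ℝ} (hY : 1 ≤ Y) :
    ∃ q : ℕ, ∃ a : ℤ, 0 < q ∧ (q : ℝ) ≤ Y ∧ |q * x - a| < Y⁻¹ := by
  have hn : 0 < ⌊Y⌋₊ := Nat.floor_pos.2 hY
  obtain ⟨q, hq0, hqn, happrox⟩ := Real.exists_nat_abs_mul_sub_round_le x hn
  refine ⟨q, round (q * x), hq0, (Nat.cast_le.2 hqn).trans (Nat.floor_le (by linarith)), ?_⟩
  calc |q * x - round (q * x)| ≤ 1 / (⌊Y⌋₊ + 1) := happrox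
    _ < Y⁻¹ := by
      rw [one_div]
      exact inv_strictAnti₀ (by linarith) (Nat.lt_floor_add_one Y)

theorem Irrational.eventually_inv_lt_abs_mul_sub {x : ℝ} (hx : Irrational x) {q : ℕ}
    (hq : q ≠ 0) : ∀ᶠ N : ℕ in atTop, ∀ a : ℤ, (N : ℝ)⁻¹ < |q * x - a| := by
  have hdist : 0 < |q * x - round (q * x)| :=
    abs_pos.2 (sub_ne_zero.2 ((hx.natCast_mul hq).ne_int _))
  filter_upwards [(tendsto_inv_atTop_nhds_zero_nat (𝕜 := ℝ)).eventually (gt_mem_nhds hdist)]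
    with N hN a
  exact hN.trans_le (round_le _ a)

theorem Real.ae_irrational : ∀ᵐ x : ℝ, Irrational x :=
  (Set.countable_range ((↑) : ℚ → ℝ)).ae_notMem volume

theorem volume_biUnion_closedBall_div_le (n q : ℕ) {r : ℝ} (hr : 0 ≤ r) :
    volume (⋃ a ∈ Finset.Icc (-(n * q : ℤ)) (n * q), closedBall ((a : ℝ) / q) (r / q)) ≤
      ENNReal.ofReal (2 * (2 * n + 1) * r) := by
  have hcard : ((Finset.Icc (-(n * q : ℤ)) (n * q)).card : ℝ) = 2 * n * q + 1 := by
    have : (Finset.Icc (-(n * q : ℤ)) (n * q)).card = 2 * n * q + 1 := by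
      rw [Int.card_Icc, sub_neg_eq_add, add_right_comm, ← two_mul, ← mul_assoc]
      exact_mod_cast Int.toNat_natCast _
    exact_mod_cast this
  calc volume (⋃ a ∈ Finset.Icc (-(n * q : ℤ)) (n * q), closedBall ((a : ℝ) / q) (r / q))
      ≤ ∑ a ∈ Finset.Icc (-(n * q : ℤ)) (n * q), volume (closedBall ((a : ℝ) / q) (r / q)) :=
        measure_biUnion_finset_le _ _
    _ = ENNReal.ofReal ((2 * n * q + 1) * (2 * (r / q))) := by
        simp_rw [Real.volume_closedBall, Finset.sum_const, nsmul_eq_mul, ← hcard]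
        rw [← ENNReal.ofReal_natCast, ← ENNReal.ofReal_mul (Nat.cast_nonneg _)]
    _ ≤ ENNReal.ofReal (2 * (2 * n + 1) * r) := by
        refine ENNReal.ofReal_le_ofReal ?_
        rcases Nat.eq_zero_or_pos q with rfl | hq
        · simp only [Nat.cast_zero, div_zero, mul_zero]
          positivity
        · have hq' : (1 : ℝ) ≤ q := Nat.one_le_cast.2 hq
          rw [mul_div_assoc', mul_div_assoc', div_le_iff₀ (by positivity)]
          nlinarith

theorem ae_eventually_inv_rpow_lt_abs_mul_sub {δ : ℝ} (hδ : 0 < δ) :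
    ∀ᵐ x : ℝ, ∀ᶠ q : ℕ in atTop, ∀ a : ℤ, ((q : ℝ) ^ (1 + δ))⁻¹ < |q * x - a| := by
  set r : ℕ → ℝ := fun q ↦ ((q : ℝ) ^ (1 + δ))⁻¹
  have hr_nonneg (q : ℕ) : 0 ≤ r q := by positivity
  have hsummable (n : ℕ) : Summable fun q ↦ 2 * (2 * n + 1) * r q :=
    (Real.summable_nat_rpow_inv.2 (by linarith)).mul_left _
  have hnear (n : ℕ) : ∀ᵐ x : ℝ, ∀ᶠ q : ℕ in atTop,
      x ∉ ⋃ a ∈ Finset.Icc (-(n * q : ℤ)) (n * q), closedBall ((a : ℝ) / q) (r q / q) := by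
    refine ae_eventually_notMem (ne_top_of_le_ne_top ?_
      (ENNReal.tsum_le_tsum fun q ↦ volume_biUnion_closedBall_div_le n q (hr_nonneg q)))
    rw [← ENNReal.ofReal_tsum_of_nonneg (fun q ↦ by positivity) (hsummable n)]
    exact ENNReal.ofReal_ne_top
  filter_upwards [ae_all_iff.2 hnear] with x hx
  obtain ⟨n, hn⟩ := exists_nat_ge (|x| + 1)
  filter_upwards [hx n, eventually_ge_atTop 1] with q hq hq1 a
  by_contra! happrox
  have hq0 : (0 : ℝ) < q := Nat.cast_pos.2 hq1
  have hq_one : (1 : ℝ) ≤ q := Nat.one_le_cast.2 hq1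
  have hr_le_one : ((q : ℝ) ^ (1 + δ))⁻¹ ≤ 1 :=
    inv_le_one_of_one_le₀ (Real.one_le_rpow hq_one (by linarith))
  refine hq (Set.mem_iUnion₂.2 ⟨a, Finset.mem_Icc.2 (abs_le.1 ?_), ?_⟩)
  · suffices |(a : ℝ)| ≤ n * q by exact_mod_cast this
    calc |(a : ℝ)| ≤ |q * x| + |q * x - a| := by simpa using abs_sub (q * x) (q * x - a)
      _ ≤ q * |x| + q := by
          rw [abs_mul, abs_of_pos hq0]
          linarith
      _ ≤ n * q := by nlinarith
  · rw [mem_closedBall, Real.dist_eq, abs_sub_div_eq_abs_mul_sub_div hq0]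
    exact div_le_div_of_nonneg_right happrox hq0.le

theorem ae_forall_pos_eventually_inv_rpow_lt_abs_mul_sub :
    ∀ᵐ x : ℝ, ∀ δ : ℝ, 0 < δ →
      ∀ᶠ q : ℕ in atTop, ∀ a : ℤ, ((q : ℝ) ^ (1 + δ))⁻¹ < |q * x - a| := by
  have hfar (k : ℕ) := ae_eventually_inv_rpow_lt_abs_mul_sub (δ := 1 / ((k : ℝ) + 1))
    Nat.one_div_pos_of_nat
  filter_upwards [ae_all_iff.2 hfar] with x hx δ hδ
  obtain ⟨k, hk⟩ := exists_nat_one_div_lt hδ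
  filter_upwards [hx k, eventually_ge_atTop 1] with q hq hq1 a
  calc ((q : ℝ) ^ (1 + δ))⁻¹ ≤ ((q : ℝ) ^ (1 + 1 / ((k : ℝ) + 1)))⁻¹ :=
        inv_anti₀ (by positivity)
          (Real.rpow_le_rpow_of_exponent_le (Nat.one_le_cast.2 hq1) (by linarith))
    _ < |q * x - a| := hq a

theorem Irrational.eventually_exists_abs_sub_div_le_one_div_sq {x ε : ℝ} (hx : Irrational x)
    (hε : 0 ≤ ε) (hfar : ∀ᶠ q : ℕ in atTop, ∀ a : ℤ, ((q : ℝ) ^ (1 + ε))⁻¹ < |q * x - a|) :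
    ∀ᶠ N : ℕ in atTop, ∃ a q : ℤ, (N : ℝ) ≤ q ∧ (q : ℝ) ≤ (N : ℝ) ^ (1 + ε) ∧
      |x - a / q| ≤ 1 / (q : ℝ) ^ 2 := by
  obtain ⟨q₀, hq₀⟩ := eventually_atTop.1 hfar
  have hsmall : ∀ᶠ N : ℕ in atTop, ∀ q ∈ Finset.Ico 1 q₀, ∀ a : ℤ, (N : ℝ)⁻¹ < |q * x - a| :=
    (Finset.eventually_all _).2 fun q hq ↦
      hx.eventually_inv_lt_abs_mul_sub (Nat.one_le_iff_ne_zero.1 (Finset.mem_Ico.1 hq).1)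
  filter_upwards [hsmall, eventually_ge_atTop 1] with N hN hN1
  have hN_one : (1 : ℝ) ≤ N := Nat.one_le_cast.2 hN1
  set Y := (N : ℝ) ^ (1 + ε)
  have hNY : (N : ℝ) ≤ Y := Real.self_le_rpow_of_one_le hN_one (by linarith)
  obtain ⟨q, a, hq0, hqY, happrox⟩ := Real.exists_nat_abs_mul_sub_lt_inv x (hN_one.trans hNY)
  have hq0' : (0 : ℝ) < q := Nat.cast_pos.2 hq0
  refine ⟨a, q, ?_, by exact_mod_cast hqY, ?_⟩
  · by_contra! hqN
    push_cast at hqN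
    rcases lt_or_ge q q₀ with hq | hq
    · have := hN q (Finset.mem_Ico.2 ⟨hq0, hq⟩) a
      have : Y⁻¹ ≤ (N : ℝ)⁻¹ := inv_anti₀ (by positivity) hNY
      linarith
    · have := hq₀ q hq a
      have : Y⁻¹ ≤ ((q : ℝ) ^ (1 + ε))⁻¹ :=
        inv_anti₀ (by positivity) (Real.rpow_le_rpow hq0'.le hqN.le (by linarith))
      linarith
  · push_cast
    rw [abs_sub_div_eq_abs_mul_sub_div hq0', div_le_iff₀ hq0']
    calc |q * x - a| ≤ Y⁻¹ := happrox.le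
      _ ≤ (q : ℝ)⁻¹ := inv_anti₀ hq0' hqY
      _ = 1 / q ^ 2 * q := by field_simp

theorem Real.ae_comp_div_const {p : ℝ → Prop} (h : ∀ᵐ x : ℝ, p x) {c : ℝ} (hc : c ≠ 0) :
    ∀ᵐ t : ℝ, p (t / c) := by
  filter_upwards [(Measure.quasiMeasurePreserving_smul volume (inv_ne_zero hc)).ae h] with t ht
  rwa [smul_eq_mul, inv_mul_eq_div] at ht

/-- For almost every `t`: for every `ε > 0` and every sufficiently large integer `N`,
there are integers `a`, `q` with `N ≤ q ≤ N^{1+ε}` and `|t/(2π) - a/q| ≤ 1/q²`. -/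
theorem dirichlet_denominator_in_range :
    ∀ᵐ t : ℝ, ∀ ε : ℝ, 0 < ε → ∃ N₀ : ℕ, ∀ N : ℕ, N₀ ≤ N →
      ∃ a q : ℤ, (N : ℝ) ≤ (q : ℝ) ∧ (q : ℝ) ≤ (N : ℝ) ^ ((1 : ℝ) + ε) ∧
        |t / (2 * Real.pi) - (a : ℝ) / (q : ℝ)| ≤ 1 / (q : ℝ) ^ 2 := by
  have h : ∀ᵐ x : ℝ, ∀ ε : ℝ, 0 < ε → ∃ N₀ : ℕ, ∀ N : ℕ, N₀ ≤ N →
      ∃ a q : ℤ, (N : ℝ) ≤ (q : ℝ) ∧ (q : ℝ) ≤ (N : ℝ) ^ ((1 : ℝ) + ε) ∧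
        |x - (a : ℝ) / (q : ℝ)| ≤ 1 / (q : ℝ) ^ 2 := by
    filter_upwards [Real.ae_irrational, ae_forall_pos_eventually_inv_rpow_lt_abs_mul_sub]
      with x hx hfar ε hε
    exact eventually_atTop.1 (hx.eventually_exists_abs_sub_div_le_one_div_sq hε.le (hfar ε hε))
  exact Real.ae_comp_div_const h (by positivity)
end

section
/- Let q = q₁ + iq₂ : ℝ × ℝ → ℂ be smooth, 2π-periodic in the first (space) variable, and solve the focusing cubic NLS: i∂ₜq + ∂ₓₓq + (1/2)|q|²q = 0. Set p = p₁ + ip₂ := i∂ₓq (with p₁, p₂ real). Let u, e : ℝ × ℝ → ℝ³ be smooth, 2π-periodic in space, satisfying the system ∂ₜu = p₁ e + p₂ (u × e) and ∂ₜe = −p₁ u − (1/2)|q|² (u × e), and suppose that at time t = 0: |u| = 1, |e| = 1, u·e = 0, ∂ₓu = q₁ e + q₂ (u × e), and ∂ₓe = −q₁ u. Then for all x and t: |u(x,t)| = 1, |e(x,t)| = 1, u(x,t)·e(x,t) = 0, ∂ₓu = q₁ e + q₂ (u × e), ∂ₓe = −q₁ u, and u solves the Schrödinger map equation ∂ₜu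 = u × ∂ₓₓu. -/
open Matrix
open scoped Matrix
set_option linter.unnecessarySeqFocus false
set_option linter.unreachableTactic false
set_option linter.unusedTactic false
set_option maxHeartbeats 1000000


section cross_algebra
variable (a b c : Fin 3 → ℝ) (r : ℝ)

lemma mycross_add_left : (a + b) ⨯₃ c = a ⨯₃ c + b ⨯₃ c := by
  ext i; fin_cases i <;> simp [cross_apply] <;> ring
lemma mycross_add_right : a ⨯₃ (b + c) = a ⨯₃ b + a ⨯₃ c := by
  ext i; fin_cases i <;> simp [cross_apply] <;> ring
lemma mycross_sub_left : (a - b) ⨯₃ c = a ⨯₃ c - b ⨯₃ c := by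
  ext i; fin_cases i <;> simp [cross_apply] <;> ring
lemma mycross_sub_right : a ⨯₃ (b - c) = a ⨯₃ b - a ⨯₃ c := by
  ext i; fin_cases i <;> simp [cross_apply] <;> ring
lemma mycross_smul_left : (r • a) ⨯₃ c = r • (a ⨯₃ c) := by
  ext i; fin_cases i <;> simp [cross_apply] <;> ring
lemma mycross_smul_right : a ⨯₃ (r • b) = r • (a ⨯₃ b) := by
  ext i; fin_cases i <;> simp [cross_apply] <;> ring
lemma mycross_neg_left : (-a) ⨯₃ c = -(a ⨯₃ c) := by
  ext i; fin_cases i <;> simp [cross_apply] <;> ring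
lemma mycross_neg_right : a ⨯₃ (-b) = -(a ⨯₃ b) := by
  ext i; fin_cases i <;> simp [cross_apply] <;> ring
lemma mycross_self : a ⨯₃ a = 0 := by
  ext i; fin_cases i <;> simp [cross_apply] <;> ring
lemma mycross_cross : a ⨯₃ (b ⨯₃ c) = (a ⬝ᵥ c) • b - (a ⬝ᵥ b) • c := by
  ext i; fin_cases i <;>
    simp [cross_apply, dotProduct, Fin.sum_univ_three] <;> ring
lemma mycross_cross_left : (a ⨯₃ b) ⨯₃ c = (a ⬝ᵥ c) • b - (b ⬝ᵥ c) • a := by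
  ext i; fin_cases i <;>
    simp [cross_apply, dotProduct, Fin.sum_univ_three] <;> ring
lemma mydot_cross_left : a ⬝ᵥ (a ⨯₃ b) = 0 := by
  simp [cross_apply, dotProduct, Fin.sum_univ_three]; ring
lemma mydot_cross_right : b ⬝ᵥ (a ⨯₃ b) = 0 := by
  simp [cross_apply, dotProduct, Fin.sum_univ_three]; ring

end cross_algebra
lemma key (a b : Fin 3 → ℝ) (i j k l : Fin 3) : |a i * b j - a k * b l| ≤ 2 * ‖a‖ * ‖b‖ := by
  have ha : ∀ i, |a i| ≤ ‖a‖ := fun i => by simpa using norm_le_pi_norm a i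
  have hb : ∀ i, |b i| ≤ ‖b‖ := fun i => by simpa using norm_le_pi_norm b i
  have h0a : (0:ℝ) ≤ ‖a‖ := norm_nonneg _
  have h0b : (0:ℝ) ≤ ‖b‖ := norm_nonneg _
  calc |a i * b j - a k * b l| ≤ |a i * b j| + |a k * b l| := abs_sub _ _
    _ = |a i| * |b j| + |a k| * |b l| := by rw [abs_mul, abs_mul]
    _ ≤ ‖a‖ * ‖b‖ + ‖a‖ * ‖b‖ :=
        add_le_add (mul_le_mul (ha i) (hb j) (abs_nonneg _) h0a)
          (mul_le_mul (ha k) (hb l) (abs_nonneg _) h0a)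
    _ ≤ 2 * ‖a‖ * ‖b‖ := by nlinarith
lemma mycross_norm_le (a b : Fin 3 → ℝ) : ‖a ⨯₃ b‖ ≤ 2 * ‖a‖ * ‖b‖ := by
  apply pi_norm_le_iff_of_nonneg (by positivity) |>.2
  intro i
  fin_cases i <;> rw [Real.norm_eq_abs] <;> simp only [cross_apply] <;>
    · show |_ * _ - _ * _| ≤ _
      exact key a b _ _ _ _

lemma myHasDerivAt.dot {f g : ℝ → Fin 3 → ℝ} {f' g' : Fin 3 → ℝ} {t : ℝ}
    (hf : HasDerivAt f f' t) (hg : HasDerivAt g g' t) :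
    HasDerivAt (fun s => f s ⬝ᵥ g s) (f' ⬝ᵥ g t + f t ⬝ᵥ g') t := by
  have h : ∀ i : Fin 3, HasDerivAt (fun s => f s i * g s i)
      (f' i * g t i + f t i * g' i) t := fun i =>
    ((hasDerivAt_pi.1 hf i).mul (hasDerivAt_pi.1 hg i))
  have h2 := HasDerivAt.sum (fun i (_ : i ∈ Finset.univ) => h i)
  rw [show (f' ⬝ᵥ g t + f t ⬝ᵥ g') = ∑ i : Fin 3, (f' i * g t i + f t i * g' i) by
    simp [dotProduct, Finset.sum_add_distrib]]
  exact h2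

lemma myHasDerivAt.cross {f g : ℝ → Fin 3 → ℝ} {f' g' : Fin 3 → ℝ} {t : ℝ}
    (hf : HasDerivAt f f' t) (hg : HasDerivAt g g' t) :
    HasDerivAt (fun s => f s ⨯₃ g s) (f' ⨯₃ g t + f t ⨯₃ g') t := by
  have hfi := hasDerivAt_pi.1 hf
  have hgi := hasDerivAt_pi.1 hg
  apply hasDerivAt_pi.2
  intro i
  fin_cases i <;>
    simp only [cross_apply, Pi.add_apply, Matrix.cons_val', Matrix.cons_val_zero,
      Matrix.cons_val_one, Matrix.head_cons, Matrix.cons_val_two, Matrix.tail_cons,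
      Matrix.head_fin_const, Fin.isValue]
  · convert ((hfi 1).mul (hgi 2)).sub ((hfi 2).mul (hgi 1)) using 1 <;> simp [funext_iff] <;> ring
  · convert ((hfi 2).mul (hgi 0)).sub ((hfi 0).mul (hgi 2)) using 1 <;> simp [funext_iff] <;> ring
  · convert ((hfi 0).mul (hgi 1)).sub ((hfi 1).mul (hgi 0)) using 1 <;> simp [funext_iff] <;> ring

section pd
variable {E : Type*} [NormedAddCommGroup E] [NormedSpace ℝ E]
variable {f : ℝ × ℝ → E} {x t : ℝ}

lemma hasDerivAt_slice1 (hf : ContDiff ℝ (⊤ : ℕ∞) f) (x t : ℝ) :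
    HasDerivAt (fun y => f (y, t)) (fderiv ℝ f (x, t) (1, 0)) x :=
  (hf.differentiable (by simp) (x, t)).hasFDerivAt.comp_hasDerivAt x
    ((hasDerivAt_id x).prodMk (hasDerivAt_const x t))

lemma hasDerivAt_slice2 (hf : ContDiff ℝ (⊤ : ℕ∞) f) (x t : ℝ) :
    HasDerivAt (fun s => f (x, s)) (fderiv ℝ f (x, t) (0, 1)) t :=
  (hf.differentiable (by simp) (x, t)).hasFDerivAt.comp_hasDerivAt t
    ((hasDerivAt_const t x).prodMk (hasDerivAt_id t))

lemma deriv_slice1 (hf : ContDiff ℝ (⊤ : ℕ∞) f) (x t : ℝ) :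
    deriv (fun y => f (y, t)) x = fderiv ℝ f (x, t) (1, 0) :=
  (hasDerivAt_slice1 hf x t).deriv

lemma deriv_slice2 (hf : ContDiff ℝ (⊤ : ℕ∞) f) (x t : ℝ) :
    deriv (fun s => f (x, s)) t = fderiv ℝ f (x, t) (0, 1) :=
  (hasDerivAt_slice2 hf x t).deriv

lemma contDiff_pdv (hf : ContDiff ℝ (⊤ : ℕ∞) f) (v : ℝ × ℝ) :
    ContDiff ℝ (⊤ : ℕ∞) (fun p => fderiv ℝ f p v) :=
  (ContinuousLinearMap.apply ℝ E v).contDiff.comp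
    (hf.fderiv_right (by simp))

-- derivative in t of (fun s => fderiv f (x, s) v)
lemma hasDerivAt_pd_slice2 (hf : ContDiff ℝ (⊤ : ℕ∞) f) (v : ℝ × ℝ) (x t : ℝ) :
    HasDerivAt (fun s => fderiv ℝ f (x, s) v)
      (fderiv ℝ (fderiv ℝ f) (x, t) (0, 1) v) t := by
  have hg : ContDiff ℝ (⊤ : ℕ∞) (fderiv ℝ f) := hf.fderiv_right (by simp)
  have h1 : HasFDerivAt (fun p => fderiv ℝ f p v)
      ((ContinuousLinearMap.apply ℝ E v).comp (fderiv ℝ (fderiv ℝ f) (x, t))) (x, t) :=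
    (ContinuousLinearMap.apply ℝ E v).hasFDerivAt.comp _
      (hg.differentiable (by simp) _).hasFDerivAt
  simpa [Function.comp_def] using h1.comp_hasDerivAt t ((hasDerivAt_const t x).prodMk (hasDerivAt_id t))

lemma hasDerivAt_pd_slice1 (hf : ContDiff ℝ (⊤ : ℕ∞) f) (v : ℝ × ℝ) (x t : ℝ) :
    HasDerivAt (fun y => fderiv ℝ f (y, t) v)
      (fderiv ℝ (fderiv ℝ f) (x, t) (1, 0) v) x := by
  have hg : ContDiff ℝ (⊤ : ℕ∞) (fderiv ℝ f) := hf.fderiv_right (by simp)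
  have h1 : HasFDerivAt (fun p => fderiv ℝ f p v)
      ((ContinuousLinearMap.apply ℝ E v).comp (fderiv ℝ (fderiv ℝ f) (x, t))) (x, t) :=
    (ContinuousLinearMap.apply ℝ E v).hasFDerivAt.comp _
      (hg.differentiable (by simp) _).hasFDerivAt
  simpa [Function.comp_def] using h1.comp_hasDerivAt x ((hasDerivAt_id x).prodMk (hasDerivAt_const x t))

/-- mixed partials: d/dt (∂ₓ f) = ∂ₓ (∂ₜ f). -/
lemma hasDerivAt_mixed (hf : ContDiff ℝ (⊤ : ℕ∞) f) (x t : ℝ) :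
    HasDerivAt (fun s => deriv (fun y => f (y, s)) x)
      (deriv (fun y => deriv (fun s => f (y, s)) t) x) t := by
  have h1 : (fun s => deriv (fun y => f (y, s)) x) =
      fun s => fderiv ℝ f (x, s) (1, 0) := by
    funext s; exact deriv_slice1 hf x s
  have h2 : (fun y => deriv (fun s => f (y, s)) t) =
      fun y => fderiv ℝ f (y, t) (0, 1) := by
    funext y; exact deriv_slice2 hf y t
  rw [h1, h2, (hasDerivAt_pd_slice1 hf (0, 1) x t).deriv]
  have hsymm : fderiv ℝ (fderiv ℝ f) (x, t) (1, 0) (0, 1) =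
      fderiv ℝ (fderiv ℝ f) (x, t) (0, 1) (1, 0) :=
    (hf.contDiffAt.isSymmSndFDerivAt (by rw [minSmoothness_of_isRCLikeNormedField]; exact WithTop.coe_le_coe.2 le_top)) _ _
  rw [hsymm]
  exact hasDerivAt_pd_slice2 hf (1, 0) x t

lemma continuous_pd_slice2 (hf : ContDiff ℝ (⊤ : ℕ∞) f) (v : ℝ × ℝ) (x : ℝ) :
    Continuous (fun s => fderiv ℝ f (x, s) v) :=
  (contDiff_pdv hf v).continuous.comp (Continuous.prodMk_right x)
end pd

section gronwall
variable {F : Type*} [NormedAddCommGroup F] [NormedSpace ℝ F]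

lemma gronwall_zero_aux {f f' : ℝ → F} {C : ℝ → ℝ}
    (hd : ∀ s, HasDerivAt f (f' s) s) (hC : Continuous C)
    (hb : ∀ s, ‖f' s‖ ≤ C s * ‖f s‖) (h0 : f 0 = 0)
    {b : ℝ} (hb0 : 0 ≤ b) : f b = 0 := by
  obtain ⟨K, hK⟩ := (isCompact_Icc (a := (0:ℝ)) (b := b)).exists_bound_of_continuousOn
    hC.continuousOn
  have key : ∀ s ∈ Set.Icc (0:ℝ) b, ‖f s‖ ≤ gronwallBound 0 K 0 (s - 0) := by
    apply norm_le_gronwallBound_of_norm_deriv_right_le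
    · exact fun s _ => ((hd s).continuousAt).continuousWithinAt
    · exact fun s _ => (hd s).hasDerivWithinAt
    · simp [h0]
    · intro s hs
      have h1 : C s ≤ K := le_trans (le_abs_self _) (by simpa using hK s (Set.mem_Icc.2 ⟨hs.1, le_of_lt hs.2⟩))
      calc ‖f' s‖ ≤ C s * ‖f s‖ := hb s
        _ ≤ K * ‖f s‖ + 0 := by
            nlinarith [norm_nonneg (f s)]
  have := key b (Set.mem_Icc.2 ⟨hb0, le_refl b⟩)
  rw [gronwallBound_ε0_δ0] at this
  exact norm_le_zero_iff.1 this

lemma gronwall_zero {f f' : ℝ → F} {C : ℝ → ℝ}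
    (hd : ∀ s, HasDerivAt f (f' s) s) (hC : Continuous C)
    (hb : ∀ s, ‖f' s‖ ≤ C s * ‖f s‖) (h0 : f 0 = 0) (t : ℝ) : f t = 0 := by
  rcases le_or_gt 0 t with h | h
  · exact gronwall_zero_aux hd hC hb h0 h
  · have hd' : ∀ s, HasDerivAt (fun r => f (-r)) (-f' (-s)) s := by
      intro s
      simpa [Function.comp_def] using (hd (-s)).scomp s (hasDerivAt_neg s)
    have := gronwall_zero_aux (f := fun r => f (-r)) (f' := fun s => -f' (-s))
      (C := fun s => C (-s)) hd' (hC.comp continuous_neg)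
      (fun s => by simpa using hb (-s)) (by simpa using h0) (b := -t) (by linarith)
    simpa using this
end gronwall

/-- Theorem 4.3 (Hasimoto frame system).  Let `q = q₁ + i q₂` be a smooth `2π`-periodic
(in space) solution of the focusing cubic NLS `i qₜ + qₓₓ + (1/2)|q|²q = 0`, and set
`p = p₁ + i p₂ := i ∂ₓ q`.  Suppose `u, e : ℝ × ℝ → ℝ³` are smooth, `2π`-periodic in space,
solve `∂ₜu = p₁ e + p₂ (u × e)` and `∂ₜe = -p₁ u - (1/2)|q|² (u × e)`, and at `t = 0`
satisfy `|u| = |e| = 1`, `u·e = 0`, `∂ₓu = q₁ e + q₂ (u × e)`, `∂ₓe = -q₁ u`.  Then these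
five identities hold for all times, and `u` solves the Schrödinger map equation
`∂ₜu = u × ∂ₓₓu`.  (Functions are written curried, `u x t`; `⬝ᵥ` is the Euclidean dot
product and `⨯₃` the cross product on `Fin 3 → ℝ`.) -/
theorem schrodinger_map_frame_system
    (q : ℝ → ℝ → ℂ) (u e : ℝ → ℝ → (Fin 3 → ℝ))
    (hqsmooth : ContDiff ℝ (⊤ : ℕ∞) (fun p : ℝ × ℝ => q p.1 p.2))
    (husmooth : ContDiff ℝ (⊤ : ℕ∞) (fun p : ℝ × ℝ => u p.1 p.2))
    (hesmooth : ContDiff ℝ (⊤ : ℕ∞) (fun p : ℝ × ℝ => e p.1 p.2))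
    (hqper : ∀ t : ℝ, Function.Periodic (fun x => q x t) (2 * Real.pi))
    (huper : ∀ t : ℝ, Function.Periodic (fun x => u x t) (2 * Real.pi))
    (heper : ∀ t : ℝ, Function.Periodic (fun x => e x t) (2 * Real.pi))
    (hnls : ∀ x t : ℝ, Complex.I * deriv (fun s => q x s) t +
      deriv (fun y => deriv (fun z => q z t) y) x +
      (1 / 2 : ℂ) * ((Complex.normSq (q x t) : ℝ) : ℂ) * q x t = 0)
    (hut : ∀ x t : ℝ, deriv (fun s => u x s) t =
      (Complex.I * deriv (fun y => q y t) x).re • e x t +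
      (Complex.I * deriv (fun y => q y t) x).im • (u x t ⨯₃ e x t))
    (het : ∀ x t : ℝ, deriv (fun s => e x s) t =
      -((Complex.I * deriv (fun y => q y t) x).re • u x t) -
      ((1 / 2) * Complex.normSq (q x t)) • (u x t ⨯₃ e x t))
    (hu0 : ∀ x : ℝ, u x 0 ⬝ᵥ u x 0 = 1)
    (he0 : ∀ x : ℝ, e x 0 ⬝ᵥ e x 0 = 1)
    (hue0 : ∀ x : ℝ, u x 0 ⬝ᵥ e x 0 = 0)
    (hux0 : ∀ x : ℝ, deriv (fun y => u y 0) x =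
      (q x 0).re • e x 0 + (q x 0).im • (u x 0 ⨯₃ e x 0))
    (hex0 : ∀ x : ℝ, deriv (fun y => e y 0) x = -((q x 0).re • u x 0)) :
    ∀ x t : ℝ,
      u x t ⬝ᵥ u x t = 1 ∧
      e x t ⬝ᵥ e x t = 1 ∧
      u x t ⬝ᵥ e x t = 0 ∧
      deriv (fun y => u y t) x =
        (q x t).re • e x t + (q x t).im • (u x t ⨯₃ e x t) ∧
      deriv (fun y => e y t) x = -((q x t).re • u x t) ∧
      deriv (fun s => u x s) t = u x t ⨯₃ deriv (fun y => deriv (fun z => u z t) y) x := by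
  have hS1 : ∀ x t : ℝ, u x t ⬝ᵥ u x t = 1 ∧ e x t ⬝ᵥ e x t = 1 ∧ u x t ⬝ᵥ e x t = 0 := by

    -- slice derivatives
    have hUt : ∀ x t, HasDerivAt (fun s => u x s)
        ((Complex.I * deriv (fun y => q y t) x).re • e x t +
         (Complex.I * deriv (fun y => q y t) x).im • (u x t ⨯₃ e x t)) t := by
      intro x t
      have h := (hasDerivAt_slice2 husmooth x t).differentiableAt.hasDerivAt
      rw [hut x t] at h; exact h
    have hEt : ∀ x t, HasDerivAt (fun s => e x s)
        (-((Complex.I * deriv (fun y => q y t) x).re • u x t) -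
         ((1 / 2) * Complex.normSq (q x t)) • (u x t ⨯₃ e x t)) t := by
      intro x t
      have h := (hasDerivAt_slice2 hesmooth x t).differentiableAt.hasDerivAt
      rw [het x t] at h; exact h
    have hcont_qx : ∀ x : ℝ, Continuous (fun t => deriv (fun y => q y t) x) := by
      intro x
      have : (fun t => deriv (fun y => q y t) x) =
          fun t => fderiv ℝ (fun p : ℝ × ℝ => q p.1 p.2) (x, t) (1, 0) := by
        funext s; exact deriv_slice1 hqsmooth x s
      rw [this]; exact continuous_pd_slice2 hqsmooth (1, 0) x
    intro x t
    set p1 : ℝ → ℝ := fun s => (Complex.I * deriv (fun y => q y s) x).re with hp1def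
    have key : (fun s => (u x s ⬝ᵥ u x s - 1, e x s ⬝ᵥ e x s - 1, u x s ⬝ᵥ e x s)) t
        = (0 : ℝ × ℝ × ℝ) := by
      apply gronwall_zero (f := fun s => (u x s ⬝ᵥ u x s - 1, e x s ⬝ᵥ e x s - 1, u x s ⬝ᵥ e x s))
        (f' := fun s => (2 * p1 s * (u x s ⬝ᵥ e x s),
          -(2 * p1 s * (u x s ⬝ᵥ e x s)),
          p1 s * ((e x s ⬝ᵥ e x s - 1) - (u x s ⬝ᵥ u x s - 1))))
        (C := fun s => 2 * |p1 s|)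
      · intro s
        refine HasDerivAt.prodMk ?_ (HasDerivAt.prodMk ?_ ?_)
        · have h := (myHasDerivAt.dot (hUt x s) (hUt x s)).sub_const 1
          convert h using 1
          simp [add_dotProduct, dotProduct_add, smul_dotProduct,
            dotProduct_smul, mydot_cross_left, mydot_cross_right,
            dotProduct_comm (u x s ⨯₃ e x s), hp1def, Complex.mul_re,
            Complex.I_re, Complex.I_im]
          rw [dotProduct_comm (e x s) (u x s)]
          ring
        · have h := (myHasDerivAt.dot (hEt x s) (hEt x s)).sub_const 1
          convert h using 1
          have h1 : e x s ⬝ᵥ (u x s ⨯₃ e x s) = 0 := mydot_cross_right _ _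
          have h2 : (u x s ⨯₃ e x s) ⬝ᵥ e x s = 0 := by
            rw [dotProduct_comm]; exact h1
          simp [add_dotProduct, dotProduct_add, smul_dotProduct,
            dotProduct_smul, sub_dotProduct, dotProduct_sub,
            neg_dotProduct, dotProduct_neg, h1, h2,
            dotProduct_comm (e x s) (u x s), hp1def, Complex.mul_re,
            Complex.I_re, Complex.I_im]
          ring
        · have h := myHasDerivAt.dot (hUt x s) (hEt x s)
          convert h using 1
          · rfl
          · rfl
          have h1 : e x s ⬝ᵥ (u x s ⨯₃ e x s) = 0 := mydot_cross_right _ _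
          have h2 : (u x s ⨯₃ e x s) ⬝ᵥ e x s = 0 := by
            rw [dotProduct_comm]; exact h1
          have h3 : u x s ⬝ᵥ (u x s ⨯₃ e x s) = 0 := mydot_cross_left _ _
          simp [add_dotProduct, dotProduct_add, smul_dotProduct,
            dotProduct_smul, sub_dotProduct, dotProduct_sub,
            neg_dotProduct, dotProduct_neg, h1, h2, h3,
            dotProduct_comm (e x s) (u x s), hp1def, Complex.mul_re,
            Complex.I_re, Complex.I_im]
          ring
      · have : Continuous fun s => (Complex.I * deriv (fun y => q y s) x) :=
          continuous_const.mul (hcont_qx x)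
        exact (continuous_const.mul (Complex.continuous_re.comp this).abs)
      · intro s
        set a := u x s ⬝ᵥ u x s - 1
        set b := e x s ⬝ᵥ e x s - 1
        set c := u x s ⬝ᵥ e x s
        have hna : |a| ≤ ‖(a, b, c)‖ := by
          rw [Prod.norm_def]; exact le_trans (le_of_eq (Real.norm_eq_abs a).symm) (le_max_left _ _)
        have hnb : |b| ≤ ‖(a, b, c)‖ := by
          rw [Prod.norm_def, Prod.norm_def]
          refine le_trans ?_ (le_max_right _ _)
          exact le_trans (le_of_eq (Real.norm_eq_abs b).symm) (le_max_left _ _)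
        have hnc : |c| ≤ ‖(a, b, c)‖ := by
          rw [Prod.norm_def, Prod.norm_def]
          refine le_trans ?_ (le_max_right _ _)
          exact le_trans (le_of_eq (Real.norm_eq_abs c).symm) (le_max_right _ _)
        rw [Prod.norm_def, Prod.norm_def]
        have h0 : (0:ℝ) ≤ ‖(a, b, c)‖ := norm_nonneg _
        refine max_le ?_ (max_le ?_ ?_) <;> rw [Real.norm_eq_abs]
        · calc |2 * p1 s * c| = 2 * |p1 s| * |c| := by rw [abs_mul, abs_mul]; simp
            _ ≤ 2 * |p1 s| * ‖(a, b, c)‖ := by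
                have := abs_nonneg (p1 s); nlinarith
        · calc |(-(2 * p1 s * c))| = 2 * |p1 s| * |c| := by
                rw [abs_neg, abs_mul, abs_mul]; simp
            _ ≤ 2 * |p1 s| * ‖(a, b, c)‖ := by
                have := abs_nonneg (p1 s); nlinarith
        · calc |p1 s * (b - a)| = |p1 s| * |b - a| := abs_mul _ _
            _ ≤ |p1 s| * (|b| + |a|) := by
                have := abs_sub (b) (a); have := abs_nonneg (p1 s); nlinarith [abs_sub b a]
            _ ≤ 2 * |p1 s| * ‖(a, b, c)‖ := by
                have := abs_nonneg (p1 s); nlinarith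
      · simp [hu0 x, he0 x, hue0 x]
    obtain ⟨k1, k2, k3⟩ : u x t ⬝ᵥ u x t - 1 = 0 ∧ e x t ⬝ᵥ e x t - 1 = 0 ∧
        u x t ⬝ᵥ e x t = 0 := by
      simpa [Prod.ext_iff] using key
    exact ⟨by linarith, by linarith, k3⟩
  have hS2 : ∀ x t : ℝ,
      deriv (fun y => u y t) x = (q x t).re • e x t + (q x t).im • (u x t ⨯₃ e x t) ∧
      deriv (fun y => e y t) x = -((q x t).re • u x t) := by

    -- basic slice derivative facts
    have hUt : ∀ x t, HasDerivAt (fun s => u x s)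
        ((Complex.I * deriv (fun y => q y t) x).re • e x t +
         (Complex.I * deriv (fun y => q y t) x).im • (u x t ⨯₃ e x t)) t := by
      intro x t
      have h := (hasDerivAt_slice2 husmooth x t).differentiableAt.hasDerivAt
      rw [hut x t] at h; exact h
    have hEt : ∀ x t, HasDerivAt (fun s => e x s)
        (-((Complex.I * deriv (fun y => q y t) x).re • u x t) -
         ((1 / 2) * Complex.normSq (q x t)) • (u x t ⨯₃ e x t)) t := by
      intro x t
      have h := (hasDerivAt_slice2 hesmooth x t).differentiableAt.hasDerivAt
      rw [het x t] at h; exact h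
    have hUx : ∀ x t, HasDerivAt (fun y => u y t) (deriv (fun y => u y t) x) x :=
      fun x t => (hasDerivAt_slice1 husmooth x t).differentiableAt.hasDerivAt
    have hEx : ∀ x t, HasDerivAt (fun y => e y t) (deriv (fun y => e y t) x) x :=
      fun x t => (hasDerivAt_slice1 hesmooth x t).differentiableAt.hasDerivAt
    have hQx : ∀ x t, HasDerivAt (fun y => q y t) (deriv (fun y => q y t) x) x :=
      fun x t => (hasDerivAt_slice1 hqsmooth x t).differentiableAt.hasDerivAt
    have hQxX : ∀ x t, HasDerivAt (fun y => deriv (fun z => q z t) y)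
        (deriv (fun y => deriv (fun z => q z t) y) x) x := by
      intro x t
      have hfun : (fun y => deriv (fun z => q z t) y) =
          (fun y => fderiv ℝ (fun p : ℝ × ℝ => q p.1 p.2) (y, t) (1, 0)) :=
        funext fun y => deriv_slice1 hqsmooth y t
      rw [hfun]
      exact (hasDerivAt_pd_slice1 hqsmooth (1, 0) x t).differentiableAt.hasDerivAt
    -- NLS rearranged
    have hqt_eq : ∀ x t, deriv (fun s => q x s) t =
        Complex.I * deriv (fun y => deriv (fun z => q z t) y) x +
        Complex.I * (((1 / 2 * Complex.normSq (q x t) : ℝ)) : ℂ) * q x t := by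
      intro x t
      have h := hnls x t
      have hI := Complex.I_ne_zero
      push_cast
      linear_combination -Complex.I * h + (deriv (fun s => q x s) t) * Complex.I_sq
    have hQt : ∀ x t, HasDerivAt (fun s => q x s)
        (Complex.I * deriv (fun y => deriv (fun z => q z t) y) x +
         Complex.I * (((1 / 2 * Complex.normSq (q x t) : ℝ)) : ℂ) * q x t) t := by
      intro x t
      have h := (hasDerivAt_slice2 hqsmooth x t).differentiableAt.hasDerivAt
      rw [hqt_eq x t] at h; exact h
    -- continuity in t
    have hcont_qx : ∀ x : ℝ, Continuous (fun t => deriv (fun y => q y t) x) := by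
      intro x
      have : (fun t => deriv (fun y => q y t) x) =
          fun t => fderiv ℝ (fun p : ℝ × ℝ => q p.1 p.2) (x, t) (1, 0) := by
        funext s; exact deriv_slice1 hqsmooth x s
      rw [this]; exact continuous_pd_slice2 hqsmooth (1, 0) x
    have hcont_q : ∀ x : ℝ, Continuous (fun t => q x t) :=
      fun x => hqsmooth.continuous.comp (Continuous.prodMk_right x : Continuous fun s => ((x, s) : ℝ × ℝ))
    -- norm bounds from stage 1
    have hnorm : ∀ (v : Fin 3 → ℝ), v ⬝ᵥ v = 1 → ‖v‖ ≤ 1 := by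
      intro v hv
      apply pi_norm_le_iff_of_nonneg zero_le_one |>.2
      intro i
      rw [Real.norm_eq_abs, abs_le]
      have h1 : v i * v i ≤ 1 := by
        rw [← hv]
        have : ∀ j ∈ Finset.univ, (0:ℝ) ≤ v j * v j := fun j _ => mul_self_nonneg _
        calc v i * v i ≤ ∑ j : Fin 3, v j * v j :=
          Finset.single_le_sum this (Finset.mem_univ i)
          _ = v ⬝ᵥ v := rfl
      constructor <;> nlinarith
    have hnu : ∀ x t, ‖u x t‖ ≤ 1 := fun x t => hnorm _ (hS1 x t).1
    have hne : ∀ x t, ‖e x t‖ ≤ 1 := fun x t => hnorm _ (hS1 x t).2.1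
    -- cross product identities from stage 1
    have hcee : ∀ x t, e x t ⨯₃ e x t = 0 := fun x t => mycross_self _
    have hcuu : ∀ x t, u x t ⨯₃ u x t = 0 := fun x t => mycross_self _
    have hcu : ∀ x t, u x t ⨯₃ (u x t ⨯₃ e x t) = -(e x t) := by
      intro x t
      rw [mycross_cross, (hS1 x t).1, (hS1 x t).2.2]
      simp
    have hce : ∀ x t, (u x t ⨯₃ e x t) ⨯₃ e x t = -(u x t) := by
      intro x t
      rw [mycross_cross_left, (hS1 x t).2.2, (hS1 x t).2.1]
      simp
    intro x t
    -- the deviation functions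
    set A : ℝ → Fin 3 → ℝ := fun s => deriv (fun y => u y s) x -
      ((q x s).re • e x s + (q x s).im • (u x s ⨯₃ e x s)) with hAdef
    set B : ℝ → Fin 3 → ℝ := fun s => deriv (fun y => e y s) x +
      (q x s).re • u x s with hBdef
    set P1 : ℝ → ℝ := fun s => (Complex.I * deriv (fun y => q y s) x).re with hP1def
    set P2 : ℝ → ℝ := fun s => (Complex.I * deriv (fun y => q y s) x).im with hP2def
    set K : ℝ → ℝ := fun s => 1 / 2 * Complex.normSq (q x s) with hKdef
    -- derivative of re/im parts of q in time
    have hq1t : ∀ s, HasDerivAt (fun s' => (q x s').re)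
        ((Complex.I * deriv (fun y => deriv (fun z => q z s) y) x +
          Complex.I * (((1 / 2 * Complex.normSq (q x s) : ℝ)) : ℂ) * q x s).re) s := by
      intro s
      simpa [Function.comp_def] using (Complex.reCLM.hasFDerivAt.comp_hasDerivAt s (hQt x s))
    have hq2t : ∀ s, HasDerivAt (fun s' => (q x s').im)
        ((Complex.I * deriv (fun y => deriv (fun z => q z s) y) x +
          Complex.I * (((1 / 2 * Complex.normSq (q x s) : ℝ)) : ℂ) * q x s).im) s := by
      intro s
      simpa [Function.comp_def] using (Complex.imCLM.hasFDerivAt.comp_hasDerivAt s (hQt x s))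
    -- HasDerivAt for A
    have hA : ∀ s, HasDerivAt A
        (P1 s • B s + P2 s • (A s ⨯₃ e x s) + P2 s • (u x s ⨯₃ B s)) s := by
      intro s
      have hmix : HasDerivAt (fun s' => deriv (fun y => u y s') x)
          (deriv (fun y => deriv (fun s' => u y s') s) x) s := hasDerivAt_mixed husmooth x s
      have hfun : (fun y => deriv (fun s' => u y s') s) =
          (fun y => (Complex.I * deriv (fun z => q z s) y).re • e y s +
            (Complex.I * deriv (fun z => q z s) y).im • (u y s ⨯₃ e y s)) :=
        funext fun y => hut y s
      rw [hfun] at hmix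
      -- derivative in x of the rhs
      have hIq : HasDerivAt (fun y => Complex.I * deriv (fun z => q z s) y)
          (Complex.I * deriv (fun y => deriv (fun z => q z s) y) x) x :=
        (hQxX x s).const_mul Complex.I
      have hp1x : HasDerivAt (fun y => (Complex.I * deriv (fun z => q z s) y).re)
          ((Complex.I * deriv (fun y => deriv (fun z => q z s) y) x).re) x := by
        simpa [Function.comp_def] using (Complex.reCLM.hasFDerivAt.comp_hasDerivAt x hIq)
      have hp2x : HasDerivAt (fun y => (Complex.I * deriv (fun z => q z s) y).im)
          ((Complex.I * deriv (fun y => deriv (fun z => q z s) y) x).im) x := by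
        simpa [Function.comp_def] using (Complex.imCLM.hasFDerivAt.comp_hasDerivAt x hIq)
      have hRHS := (hp1x.smul (hEx x s)).add
        (hp2x.smul (myHasDerivAt.cross (hUx x s) (hEx x s)))
      rw [(by exact hRHS.deriv : deriv (fun y => (Complex.I * deriv (fun z => q z s) y).re • e y s +
        (Complex.I * deriv (fun z => q z s) y).im • (u y s ⨯₃ e y s)) x = _)] at hmix
      -- derivative in t of the frame part
      have hq1 : HasDerivAt (fun s' => (q x s').re • e x s') _ s := (hq1t s).smul (hEt x s)
      have hq2 : HasDerivAt (fun s' => (q x s').im • (u x s' ⨯₃ e x s')) _ s :=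
        (hq2t s).smul (myHasDerivAt.cross (hUt x s) (hEt x s))
      have hbig := hmix.sub (hq1.add hq2)
      rw [hAdef]
      convert hbig using 1
      · rfl
      · rfl
      · rfl
      · rfl
      -- now a pure algebra goal
      simp only [hP1def, hP2def, hBdef]
      simp only [mycross_add_left, mycross_add_right, mycross_sub_left, mycross_sub_right,
        mycross_neg_left, mycross_neg_right, mycross_smul_left, mycross_smul_right,
        mycross_self, hcu x s, hce x s, smul_zero, smul_neg, smul_add, smul_sub, smul_smul]
      simp only [Complex.add_re, Complex.add_im, Complex.mul_re, Complex.mul_im, Complex.I_re,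
        Complex.I_im, Complex.ofReal_re, Complex.ofReal_im]
      module
    -- HasDerivAt for B
    have hB : ∀ s, HasDerivAt B
        (-(P1 s • A s) - K s • (A s ⨯₃ e x s) - K s • (u x s ⨯₃ B s)) s := by
      intro s
      have hmix : HasDerivAt (fun s' => deriv (fun y => e y s') x)
          (deriv (fun y => deriv (fun s' => e y s') s) x) s := hasDerivAt_mixed hesmooth x s
      have hfun : (fun y => deriv (fun s' => e y s') s) =
          (fun y => -((Complex.I * deriv (fun z => q z s) y).re • u y s) -
            ((1 / 2) * Complex.normSq (q y s)) • (u y s ⨯₃ e y s)) :=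
        funext fun y => het y s
      rw [hfun] at hmix
      have hIq : HasDerivAt (fun y => Complex.I * deriv (fun z => q z s) y)
          (Complex.I * deriv (fun y => deriv (fun z => q z s) y) x) x :=
        (hQxX x s).const_mul Complex.I
      have hp1x : HasDerivAt (fun y => (Complex.I * deriv (fun z => q z s) y).re)
          ((Complex.I * deriv (fun y => deriv (fun z => q z s) y) x).re) x := by
        simpa [Function.comp_def] using (Complex.reCLM.hasFDerivAt.comp_hasDerivAt x hIq)
      have hqrex : HasDerivAt (fun y => (q y s).re) ((deriv (fun y => q y s) x).re) x := by
        simpa [Function.comp_def] using (Complex.reCLM.hasFDerivAt.comp_hasDerivAt x (hQx x s))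
      have hqimx : HasDerivAt (fun y => (q y s).im) ((deriv (fun y => q y s) x).im) x := by
        simpa [Function.comp_def] using (Complex.imCLM.hasFDerivAt.comp_hasDerivAt x (hQx x s))
      have hk : HasDerivAt (fun y => (1 / 2 : ℝ) * Complex.normSq (q y s))
          ((1 / 2 : ℝ) * ((deriv (fun y => q y s) x).re * (q x s).re +
            (q x s).re * (deriv (fun y => q y s) x).re +
            ((deriv (fun y => q y s) x).im * (q x s).im +
             (q x s).im * (deriv (fun y => q y s) x).im))) x := by
        have h0 := ((hqrex.mul hqrex).add (hqimx.mul hqimx)).const_mul (1 / 2 : ℝ)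
        have hfn : (fun y => (1 / 2 : ℝ) * ((q y s).re * (q y s).re + (q y s).im * (q y s).im)) =
            (fun y => (1 / 2 : ℝ) * Complex.normSq (q y s)) := by
          funext y; rw [Complex.normSq_apply]
        rw [← hfn]
        exact h0
      have hRHS := ((hp1x.smul (hUx x s)).neg).sub
        (hk.smul (myHasDerivAt.cross (hUx x s) (hEx x s)))
      rw [(by exact hRHS.deriv : deriv (fun y => -((Complex.I * deriv (fun z => q z s) y).re • u y s) -
        ((1 / 2) * Complex.normSq (q y s)) • (u y s ⨯₃ e y s)) x = _)] at hmix
      have hq1u : HasDerivAt (fun s' => (q x s').re • u x s') _ s := (hq1t s).smul (hUt x s)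
      have hbig := hmix.add hq1u
      rw [hBdef]
      convert hbig using 1
      · rfl
      · rfl
      · rfl
      · rfl
      simp only [hP1def, hKdef, hBdef, hAdef]
      simp only [mycross_add_left, mycross_add_right, mycross_sub_left, mycross_sub_right,
        mycross_neg_left, mycross_neg_right, mycross_smul_left, mycross_smul_right,
        mycross_self, hcu x s, hce x s, smul_zero, smul_neg, smul_add, smul_sub, smul_smul]
      simp only [Complex.add_re, Complex.add_im, Complex.mul_re, Complex.mul_im, Complex.I_re,
        Complex.I_im, Complex.ofReal_re, Complex.ofReal_im, Complex.normSq_apply]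
      module
    -- Gronwall for the pair (A, B)
    have key : (fun r => (A r, B r)) t = (0 : (Fin 3 → ℝ) × (Fin 3 → ℝ)) := by
      apply gronwall_zero (f := fun r => (A r, B r))
        (f' := fun s => (P1 s • B s + P2 s • (A s ⨯₃ e x s) + P2 s • (u x s ⨯₃ B s),
          -(P1 s • A s) - K s • (A s ⨯₃ e x s) - K s • (u x s ⨯₃ B s)))
        (C := fun s => |P1 s| + 4 * |P2 s| + 4 * |K s|)
      · exact fun s => (hA s).prodMk (hB s)
      · have hc1 : Continuous fun s => Complex.I * deriv (fun y => q y s) x :=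
          continuous_const.mul (hcont_qx x)
        have hcP1 : Continuous P1 := by rw [hP1def]; exact Complex.continuous_re.comp hc1
        have hcP2 : Continuous P2 := by rw [hP2def]; exact Complex.continuous_im.comp hc1
        have hcK : Continuous K := by
          rw [hKdef]
          exact continuous_const.mul (Complex.continuous_normSq.comp (hcont_q x))
        exact ((hcP1.abs.add ((continuous_const.mul hcP2.abs)))).add
          (continuous_const.mul hcK.abs)
      · intro s
        set M := ‖(A s, B s)‖ with hMdef
        have hMA : ‖A s‖ ≤ M := by rw [hMdef, Prod.norm_def]; exact le_max_left _ _
        have hMB : ‖B s‖ ≤ M := by rw [hMdef, Prod.norm_def]; exact le_max_right _ _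
        have hM0 : (0:ℝ) ≤ M := norm_nonneg _
        have hcrA : ‖A s ⨯₃ e x s‖ ≤ 2 * M := by
          calc ‖A s ⨯₃ e x s‖ ≤ 2 * ‖A s‖ * ‖e x s‖ := mycross_norm_le _ _
            _ ≤ 2 * M := by nlinarith [hne x s, norm_nonneg (A s), norm_nonneg (e x s)]
        have hcrB : ‖u x s ⨯₃ B s‖ ≤ 2 * M := by
          calc ‖u x s ⨯₃ B s‖ ≤ 2 * ‖u x s‖ * ‖B s‖ := mycross_norm_le _ _
            _ ≤ 2 * M := by nlinarith [hnu x s, norm_nonneg (B s), norm_nonneg (u x s)]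
        have h1 : ‖P1 s • B s + P2 s • (A s ⨯₃ e x s) + P2 s • (u x s ⨯₃ B s)‖ ≤
            (|P1 s| + 4 * |P2 s| + 4 * |K s|) * M := by
          calc ‖P1 s • B s + P2 s • (A s ⨯₃ e x s) + P2 s • (u x s ⨯₃ B s)‖
              ≤ ‖P1 s • B s‖ + ‖P2 s • (A s ⨯₃ e x s)‖ + ‖P2 s • (u x s ⨯₃ B s)‖ :=
                norm_add₃_le
            _ = |P1 s| * ‖B s‖ + |P2 s| * ‖A s ⨯₃ e x s‖ + |P2 s| * ‖u x s ⨯₃ B s‖ := by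
                rw [norm_smul, norm_smul, norm_smul]; simp [Real.norm_eq_abs]
            _ ≤ (|P1 s| + 4 * |P2 s| + 4 * |K s|) * M := by
                nlinarith [abs_nonneg (P1 s), abs_nonneg (P2 s), abs_nonneg (K s),
                  norm_nonneg (A s ⨯₃ e x s), norm_nonneg (u x s ⨯₃ B s)]
        have h2 : ‖-(P1 s • A s) - K s • (A s ⨯₃ e x s) - K s • (u x s ⨯₃ B s)‖ ≤
            (|P1 s| + 4 * |P2 s| + 4 * |K s|) * M := by
          calc ‖-(P1 s • A s) - K s • (A s ⨯₃ e x s) - K s • (u x s ⨯₃ B s)‖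
              ≤ ‖-(P1 s • A s) - K s • (A s ⨯₃ e x s)‖ + ‖K s • (u x s ⨯₃ B s)‖ :=
                norm_sub_le _ _
            _ ≤ ‖-(P1 s • A s)‖ + ‖K s • (A s ⨯₃ e x s)‖ + ‖K s • (u x s ⨯₃ B s)‖ := by
                have := norm_sub_le (-(P1 s • A s)) (K s • (A s ⨯₃ e x s)); linarith
            _ = |P1 s| * ‖A s‖ + |K s| * ‖A s ⨯₃ e x s‖ + |K s| * ‖u x s ⨯₃ B s‖ := by
                rw [norm_neg, norm_smul, norm_smul, norm_smul]; simp [Real.norm_eq_abs]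
            _ ≤ (|P1 s| + 4 * |P2 s| + 4 * |K s|) * M := by
                nlinarith [abs_nonneg (P1 s), abs_nonneg (P2 s), abs_nonneg (K s),
                  norm_nonneg (A s ⨯₃ e x s), norm_nonneg (u x s ⨯₃ B s)]
        calc ‖((P1 s • B s + P2 s • (A s ⨯₃ e x s) + P2 s • (u x s ⨯₃ B s),
            -(P1 s • A s) - K s • (A s ⨯₃ e x s) - K s • (u x s ⨯₃ B s)) :
              (Fin 3 → ℝ) × (Fin 3 → ℝ))‖
            = max ‖P1 s • B s + P2 s • (A s ⨯₃ e x s) + P2 s • (u x s ⨯₃ B s)‖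
              ‖-(P1 s • A s) - K s • (A s ⨯₃ e x s) - K s • (u x s ⨯₃ B s)‖ := rfl
          _ ≤ (|P1 s| + 4 * |P2 s| + 4 * |K s|) * M := max_le h1 h2
      · have hA0 : A 0 = 0 := by
          simp only [hAdef]
          rw [hux0 x]; abel
        have hB0 : B 0 = 0 := by
          simp only [hBdef]
          rw [hex0 x]; abel
        simp [hA0, hB0]
    obtain ⟨kA, kB⟩ : A t = 0 ∧ B t = 0 := by simpa [Prod.ext_iff] using key
    constructor
    · have := sub_eq_zero.1 kA
      simpa [hAdef] using this
    · have h := kB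
      simp only [hBdef] at h
      have := eq_neg_of_add_eq_zero_left h
      simpa using this
  -- Stage 3: the Schrödinger map equation
  intro x t
  refine ⟨(hS1 x t).1, (hS1 x t).2.1, (hS1 x t).2.2, (hS2 x t).1, (hS2 x t).2, ?_⟩
  have hUx : ∀ x t, HasDerivAt (fun y => u y t) (deriv (fun y => u y t) x) x :=
    fun x t => (hasDerivAt_slice1 husmooth x t).differentiableAt.hasDerivAt
  have hEx : ∀ x t, HasDerivAt (fun y => e y t) (deriv (fun y => e y t) x) x :=
    fun x t => (hasDerivAt_slice1 hesmooth x t).differentiableAt.hasDerivAt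
  have hQx : ∀ x t, HasDerivAt (fun y => q y t) (deriv (fun y => q y t) x) x :=
    fun x t => (hasDerivAt_slice1 hqsmooth x t).differentiableAt.hasDerivAt
  have hqrex : HasDerivAt (fun y => (q y t).re) ((deriv (fun y => q y t) x).re) x := by
    simpa [Function.comp_def] using (Complex.reCLM.hasFDerivAt.comp_hasDerivAt x (hQx x t))
  have hqimx : HasDerivAt (fun y => (q y t).im) ((deriv (fun y => q y t) x).im) x := by
    simpa [Function.comp_def] using (Complex.imCLM.hasFDerivAt.comp_hasDerivAt x (hQx x t))
  have hV := (hqrex.smul (hEx x t)).add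
    (hqimx.smul (myHasDerivAt.cross (hUx x t) (hEx x t)))
  have hfun : (fun y => deriv (fun z => u z t) y) =
      (fun y => (q y t).re • e y t + (q y t).im • (u y t ⨯₃ e y t)) :=
    funext fun y => (hS2 y t).1
  rw [hfun, (by exact hV.deriv : deriv (fun y => (q y t).re • e y t + (q y t).im • (u y t ⨯₃ e y t)) x = _), hut x t, (hS2 x t).1, (hS2 x t).2]
  have hcu : u x t ⨯₃ (u x t ⨯₃ e x t) = -(e x t) := by
    rw [mycross_cross, (hS1 x t).1, (hS1 x t).2.2]
    simp
  have hce : (u x t ⨯₃ e x t) ⨯₃ e x t = -(u x t) := by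
    rw [mycross_cross_left, (hS1 x t).2.2, (hS1 x t).2.1]
    simp
  simp only [mycross_add_left, mycross_add_right, mycross_sub_left, mycross_sub_right,
    mycross_neg_left, mycross_neg_right, mycross_smul_left, mycross_smul_right,
    mycross_self, hcu, hce, smul_zero, smul_neg, smul_add, smul_sub, smul_smul]
  simp only [Complex.add_re, Complex.add_im, Complex.mul_re, Complex.mul_im, Complex.I_re,
    Complex.I_im, Complex.ofReal_re, Complex.ofReal_im]
  module
end

section
/- For every α ∈ [−1/2, 1/2] and every δ > 0 there is a constant C = C(α,δ) such that for all sequences u, v : ℤ → ℂ, ‖ ⟨n⟩^{α} (u * v)(n) ‖_{ℓ²(ℤ)} ≤ C ‖ ⟨n⟩^{1/2+δ} u(n) ‖_{ℓ²(ℤ)} · ‖ ⟨n⟩^{α} v(n) ‖_{ℓ²(ℤ)}, where (u*v)(n) = Σ_{k∈ℤ} u(n−k)v(k). (Equivalently, in terms of Fourier-defined Sobolev norms on the torus: ‖fg‖_{H^α(T)} ≲ ‖f‖_{H^{1/2+δ}(T)} ‖g‖_{H^α(T)}.) -/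
open Real

namespace SobolevBilinearAux

lemma key_rpow {x y z β s : ℝ} (hx : 1 ≤ x) (hy : 1 ≤ y) (hz : 1 ≤ z)
    (hxyz : x ≤ y + z) (hβ0 : 0 ≤ β) (hβ : 2 * β ≤ 1) (hs : 1 ≤ s) :
    x ^ (2 * β) * (y ^ (-s) * z ^ (-(2 * β))) ≤ 2 * (z ^ (-s) + y ^ (-s)) := by
  have hx0 : (0:ℝ) < x := lt_of_lt_of_le one_pos hx
  have hy0 : (0:ℝ) < y := lt_of_lt_of_le one_pos hy
  have hz0 : (0:ℝ) < z := lt_of_lt_of_le one_pos hz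
  have h2β : (0:ℝ) ≤ 2 * β := by linarith
  rcases le_total z y with h | h
  · have hxy : x ≤ 2 * y := by linarith
    have h1 : x ^ (2 * β) ≤ 2 * y ^ (2 * β) := by
      calc x ^ (2 * β) ≤ (2 * y) ^ (2 * β) := Real.rpow_le_rpow hx0.le hxy h2β
        _ = 2 ^ (2 * β) * y ^ (2 * β) := Real.mul_rpow (by norm_num) hy0.le
        _ ≤ 2 * y ^ (2 * β) := by
            have h2 : (2:ℝ) ^ (2 * β) ≤ 2 ^ (1:ℝ) :=
              Real.rpow_le_rpow_of_exponent_le one_le_two hβ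
            rw [Real.rpow_one] at h2
            exact mul_le_mul_of_nonneg_right h2 (Real.rpow_nonneg hy0.le _)
    have h3 : y ^ (2 * β - s) ≤ z ^ (2 * β - s) :=
      Real.rpow_le_rpow_of_nonpos hz0 h (by linarith)
    have e1 : y ^ (2 * β) * y ^ (-s) = y ^ (2 * β - s) := by
      rw [← Real.rpow_add hy0, sub_eq_add_neg]
    have e2 : z ^ (2 * β - s) * z ^ (-(2 * β)) = z ^ (-s) := by
      rw [← Real.rpow_add hz0]; congr 1; ring
    have hznn : (0:ℝ) ≤ z ^ (-(2*β)) := Real.rpow_nonneg hz0.le _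
    calc x ^ (2 * β) * (y ^ (-s) * z ^ (-(2 * β)))
        ≤ 2 * y ^ (2 * β) * (y ^ (-s) * z ^ (-(2 * β))) := by
          apply mul_le_mul_of_nonneg_right h1
          exact mul_nonneg (Real.rpow_nonneg hy0.le _) hznn
      _ = 2 * ((y ^ (2*β) * y ^ (-s)) * z ^ (-(2*β))) := by ring
      _ = 2 * (y ^ (2 * β - s) * z ^ (-(2*β))) := by rw [e1]
      _ ≤ 2 * (z ^ (2 * β - s) * z ^ (-(2*β))) := by
          apply mul_le_mul_of_nonneg_left (mul_le_mul_of_nonneg_right h3 hznn) (by norm_num)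
      _ = 2 * z ^ (-s) := by rw [e2]
      _ ≤ 2 * (z ^ (-s) + y ^ (-s)) := by
          have : (0:ℝ) ≤ y ^ (-s) := Real.rpow_nonneg hy0.le _
          linarith
  · have hxy : x ≤ 2 * z := by linarith
    have h1 : x ^ (2 * β) ≤ 2 * z ^ (2 * β) := by
      calc x ^ (2 * β) ≤ (2 * z) ^ (2 * β) := Real.rpow_le_rpow hx0.le hxy h2β
        _ = 2 ^ (2 * β) * z ^ (2 * β) := Real.mul_rpow (by norm_num) hz0.le
        _ ≤ 2 * z ^ (2 * β) := by
            have h2 : (2:ℝ) ^ (2 * β) ≤ 2 ^ (1:ℝ) :=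
              Real.rpow_le_rpow_of_exponent_le one_le_two hβ
            rw [Real.rpow_one] at h2
            exact mul_le_mul_of_nonneg_right h2 (Real.rpow_nonneg hz0.le _)
    have e2 : z ^ (2 * β) * z ^ (-(2 * β)) = 1 := by
      rw [← Real.rpow_add hz0]; simp
    calc x ^ (2 * β) * (y ^ (-s) * z ^ (-(2 * β)))
        ≤ 2 * z ^ (2 * β) * (y ^ (-s) * z ^ (-(2 * β))) := by
          apply mul_le_mul_of_nonneg_right h1
          exact mul_nonneg (Real.rpow_nonneg hy0.le _) (Real.rpow_nonneg hz0.le _)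
      _ = 2 * (y ^ (-s) * (z ^ (2*β) * z ^ (-(2*β)))) := by ring
      _ = 2 * y ^ (-s) := by rw [e2, mul_one]
      _ ≤ 2 * (z ^ (-s) + y ^ (-s)) := by
          have : (0:ℝ) ≤ z ^ (-s) := Real.rpow_nonneg hz0.le _
          linarith

lemma summable_w {s : ℝ} (hs : 1 < s) :
    Summable (fun m : ℤ => (1 + |(m : ℝ)|) ^ (-s)) := by
  have hnat : Summable (fun n : ℕ => ((1:ℝ) + n) ^ (-s)) := by
    have h0 : Summable (fun n : ℕ => ((n:ℝ)) ^ (-s)) :=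
      Real.summable_nat_rpow.mpr (by linarith)
    have h1 := (summable_nat_add_iff 1).mpr h0
    apply h1.congr
    intro n
    push_cast
    ring_nf
  apply Summable.of_nat_of_neg
  · apply hnat.congr; intro n; norm_num
  · apply hnat.congr; intro n; norm_num

lemma tsum_cs {a b : ℤ → ℝ} (ha0 : ∀ k, 0 ≤ a k) (hb0 : ∀ k, 0 ≤ b k)
    (ha : Summable (fun k => a k ^ 2)) (hb : Summable (fun k => b k ^ 2)) :
    Summable (fun k => a k * b k) ∧
      ∑' k, a k * b k ≤ Real.sqrt (∑' k, a k ^ 2) * Real.sqrt (∑' k, b k ^ 2) := by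
  have hsum : Summable (fun k => a k * b k) := by
    refine Summable.of_nonneg_of_le (fun k => mul_nonneg (ha0 k) (hb0 k)) (fun k => ?_)
      (((ha.add hb).mul_left (1/2)))
    nlinarith [sq_nonneg (a k - b k)]
  refine ⟨hsum, Summable.tsum_le_of_sum_le hsum fun t => ?_⟩
  have h1 : (∑ k ∈ t, a k * b k) ^ 2 ≤ (∑ k ∈ t, a k ^ 2) * (∑ k ∈ t, b k ^ 2) :=
    Finset.sum_mul_sq_le_sq_mul_sq t a b
  have h2 : ∑ k ∈ t, a k ^ 2 ≤ ∑' k, a k ^ 2 :=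
    Summable.sum_le_tsum t (fun k _ => sq_nonneg _) ha
  have h3 : ∑ k ∈ t, b k ^ 2 ≤ ∑' k, b k ^ 2 :=
    Summable.sum_le_tsum t (fun k _ => sq_nonneg _) hb
  calc ∑ k ∈ t, a k * b k
      = Real.sqrt ((∑ k ∈ t, a k * b k) ^ 2) :=
        (Real.sqrt_sq (Finset.sum_nonneg fun k _ => mul_nonneg (ha0 k) (hb0 k))).symm
    _ ≤ Real.sqrt ((∑' k, a k ^ 2) * (∑' k, b k ^ 2)) := by
        apply Real.sqrt_le_sqrt
        refine h1.trans (mul_le_mul h2 h3 (Finset.sum_nonneg fun k _ => sq_nonneg _)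
          (tsum_nonneg fun k => sq_nonneg _))
    _ = Real.sqrt (∑' k, a k ^ 2) * Real.sqrt (∑' k, b k ^ 2) :=
        Real.sqrt_mul (tsum_nonneg fun k => sq_nonneg _) _

/-- shear equivalence `(a, b) ↦ (a - b, b)` on `ℤ × ℤ`. -/
def shearSub : ℤ × ℤ ≃ ℤ × ℤ where
  toFun p := (p.1 - p.2, p.2)
  invFun p := (p.1 + p.2, p.2)
  left_inv p := by simp
  right_inv p := by simp

@[simp] lemma shearSub_apply (p : ℤ × ℤ) : shearSub p = (p.1 - p.2, p.2) := rfl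

end SobolevBilinearAux

set_option maxHeartbeats 1000000

open SobolevBilinearAux in

/-- Lemma 6.1 (bilinear estimate in Fourier space): for `α ∈ [-1/2, 1/2]` and `δ > 0`,
`‖⟨n⟩^α (u*v)(n)‖_{ℓ²} ≤ C ‖⟨n⟩^{1/2+δ} u‖_{ℓ²} ‖⟨n⟩^α v‖_{ℓ²}`, where
`(u*v)(n) = Σ_k u(n-k) v(k)`; if the two right-hand norms are finite then the convolution
series converges absolutely and the left-hand norm is finite and bounded as stated.
(Equivalently, `‖fg‖_{H^α(𝕋)} ≲ ‖f‖_{H^{1/2+δ}(𝕋)} ‖g‖_{H^α(𝕋)}`.) -/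
theorem sobolev_bilinear_estimate (α : ℝ) (hα : α ∈ Set.Icc (-(1 / 2) : ℝ) (1 / 2))
    (δ : ℝ) (hδ : 0 < δ) :
    ∃ C : ℝ, 0 < C ∧ ∀ u v : ℤ → ℂ,
      Summable (fun n : ℤ => ((1 + |(n : ℝ)|) ^ ((1 : ℝ) / 2 + δ) * ‖u n‖) ^ 2) →
      Summable (fun n : ℤ => ((1 + |(n : ℝ)|) ^ α * ‖v n‖) ^ 2) →
      (∀ n : ℤ, Summable (fun k : ℤ => u (n - k) * v k)) ∧
      Summable (fun n : ℤ =>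
        ((1 + |(n : ℝ)|) ^ α * ‖∑' k : ℤ, u (n - k) * v k‖) ^ 2) ∧
      Real.sqrt (∑' n : ℤ, ((1 + |(n : ℝ)|) ^ α * ‖∑' k : ℤ, u (n - k) * v k‖) ^ 2) ≤
        C * Real.sqrt (∑' n : ℤ, ((1 + |(n : ℝ)|) ^ ((1 : ℝ) / 2 + δ) * ‖u n‖) ^ 2) *
          Real.sqrt (∑' n : ℤ, ((1 + |(n : ℝ)|) ^ α * ‖v n‖) ^ 2) := by
  obtain ⟨hα1, hα2⟩ := hα
  have h1le : ∀ m : ℤ, (1:ℝ) ≤ 1 + |(m : ℝ)| := fun m => le_add_of_nonneg_right (abs_nonneg _)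
  have hwpos : ∀ m : ℤ, (0:ℝ) < 1 + |(m : ℝ)| := fun m => lt_of_lt_of_le one_pos (h1le m)
  set σ : ℝ := (1 : ℝ) / 2 + δ with hσdef
  set s : ℝ := 2 * σ with hsdef
  have hs1 : (1:ℝ) < s := by rw [hsdef, hσdef]; linarith
  have hWs : Summable (fun m : ℤ => (1 + |(m : ℝ)|) ^ (-s)) := summable_w hs1
  set W : ℝ := ∑' m : ℤ, (1 + |(m : ℝ)|) ^ (-s) with hWdef
  have hW1 : (1:ℝ) ≤ W := by
    have h00 : ((1:ℝ) + |((0:ℤ) : ℝ)|) ^ (-s) = 1 := by norm_num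
    have h := Summable.le_tsum hWs 0 (fun j _ => Real.rpow_nonneg (hwpos j).le _)
    rw [h00] at h
    exact h
  have hW0 : (0:ℝ) ≤ W := by linarith
  refine ⟨Real.sqrt (4 * W), Real.sqrt_pos.mpr (by linarith), ?_⟩
  intro u v hu hv
  set F : ℤ → ℝ := fun m => (1 + |(m : ℝ)|) ^ σ * ‖u m‖ with hFdef
  set G : ℤ → ℝ := fun k => (1 + |(k : ℝ)|) ^ α * ‖v k‖ with hGdef
  set M : ℤ → ℤ → ℝ := fun n k =>
    (1 + |(n : ℝ)|) ^ α * ((1 + |((n - k : ℤ) : ℝ)|) ^ (-σ) * (1 + |(k : ℝ)|) ^ (-α))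
    with hMdef
  have hF2 : Summable (fun m : ℤ => F m ^ 2) := by simp only [hFdef]; exact hu
  have hG2 : Summable (fun k : ℤ => G k ^ 2) := by simp only [hGdef]; exact hv
  have hF0 : ∀ m, 0 ≤ F m := by intro m; rw [hFdef]; positivity
  have hG0 : ∀ k, 0 ≤ G k := by intro k; rw [hGdef]; positivity
  have hM0 : ∀ n k, 0 ≤ M n k := by intro n k; rw [hMdef]; positivity
  have hTF0 : (0:ℝ) ≤ ∑' m : ℤ, F m ^ 2 := tsum_nonneg fun m => sq_nonneg _
  -- triangle inequalities
  have hTri1 : ∀ n k : ℤ, (1 + |(n:ℝ)|) ≤ (1 + |((n - k : ℤ) : ℝ)|) + (1 + |(k:ℝ)|) := by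
    intro n k
    have h : |(n:ℝ)| ≤ |(n:ℝ) - (k:ℝ)| + |(k:ℝ)| := by
      simpa using abs_add_le ((n:ℝ) - (k:ℝ)) (k:ℝ)
    push_cast
    linarith
  have hTri2 : ∀ n k : ℤ, (1 + |(k:ℝ)|) ≤ (1 + |((n - k : ℤ) : ℝ)|) + (1 + |(n:ℝ)|) := by
    intro n k
    have h : |(k:ℝ)| ≤ |(k:ℝ) - (n:ℝ)| + |(n:ℝ)| := by
      simpa using abs_add_le ((k:ℝ) - (n:ℝ)) (n:ℝ)
    have h2 : |((n - k : ℤ):ℝ)| = |(k:ℝ) - (n:ℝ)| := by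
      push_cast
      rw [abs_sub_comm]
    rw [h2]
    linarith
  have hsqe : ∀ (t e : ℝ), 0 < t → (t ^ e) ^ 2 = t ^ (2 * e) := by
    intro t e ht
    rw [pow_two, ← Real.rpow_add ht]
    congr 1
    ring
  -- pointwise identity
  have hId : ∀ n k : ℤ, M n k * (F (n - k) * G k) =
      (1 + |(n:ℝ)|) ^ α * (‖u (n - k)‖ * ‖v k‖) := by
    intro n k
    have c1 : (1 + |((n - k : ℤ):ℝ)|) ^ (-σ) * (1 + |((n - k : ℤ):ℝ)|) ^ σ = 1 := by
      rw [← Real.rpow_add (hwpos _)]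
      simp
    have c2 : (1 + |(k:ℝ)|) ^ (-α) * (1 + |(k:ℝ)|) ^ α = 1 := by
      rw [← Real.rpow_add (hwpos _)]
      simp
    simp only [hMdef, hFdef, hGdef]
    calc ((1 + |(n:ℝ)|) ^ α * ((1 + |((n - k : ℤ):ℝ)|) ^ (-σ) * (1 + |(k:ℝ)|) ^ (-α))) *
        (((1 + |((n - k : ℤ):ℝ)|) ^ σ * ‖u (n - k)‖) * ((1 + |(k:ℝ)|) ^ α * ‖v k‖))
        = (1 + |(n:ℝ)|) ^ α * (((1 + |((n - k : ℤ):ℝ)|) ^ (-σ) * (1 + |((n - k : ℤ):ℝ)|) ^ σ) *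
            (((1 + |(k:ℝ)|) ^ (-α) * (1 + |(k:ℝ)|) ^ α) * (‖u (n - k)‖ * ‖v k‖))) := by ring
      _ = (1 + |(n:ℝ)|) ^ α * (‖u (n - k)‖ * ‖v k‖) := by rw [c1, c2]; ring
  -- M squared
  have hMsqeq : ∀ n k : ℤ, M n k ^ 2 =
      (1 + |(n:ℝ)|) ^ (2 * α) *
        ((1 + |((n - k : ℤ):ℝ)|) ^ (-s) * (1 + |(k:ℝ)|) ^ (-(2 * α))) := by
    intro n k
    simp only [hMdef]
    rw [mul_pow, mul_pow, hsqe _ _ (hwpos n), hsqe _ _ (hwpos (n - k)), hsqe _ _ (hwpos k)]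
    rw [show (2:ℝ) * -σ = -s by rw [hsdef]; ring, show (2:ℝ) * -α = -(2 * α) by ring]
  have hMsq_bound1 : 0 ≤ α → ∀ n k : ℤ, M n k ^ 2 ≤
      2 * ((1 + |(k:ℝ)|) ^ (-s) + (1 + |((n - k : ℤ):ℝ)|) ^ (-s)) := by
    intro hα0 n k
    rw [hMsqeq n k]
    exact key_rpow (h1le n) (h1le (n - k)) (h1le k) (hTri1 n k) hα0 (by linarith) hs1.le
  have hMsq_bound2 : α < 0 → ∀ n k : ℤ, M n k ^ 2 ≤
      2 * ((1 + |(n:ℝ)|) ^ (-s) + (1 + |((n - k : ℤ):ℝ)|) ^ (-s)) := by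
    intro hαneg n k
    have hk := key_rpow (h1le k) (h1le (n - k)) (h1le n) (hTri2 n k)
      (β := -α) (by linarith) (by linarith) hs1.le
    have e1 : (1 + |(k:ℝ)|) ^ (2 * -α) = (1 + |(k:ℝ)|) ^ (-(2 * α)) := by congr 1; ring
    have e2 : (1 + |(n:ℝ)|) ^ (-(2 * -α)) = (1 + |(n:ℝ)|) ^ (2 * α) := by congr 1; ring
    rw [e1, e2] at hk
    calc M n k ^ 2
        = (1 + |(k:ℝ)|) ^ (-(2 * α)) *
            ((1 + |((n - k : ℤ):ℝ)|) ^ (-s) * (1 + |(n:ℝ)|) ^ (2 * α)) := by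
          rw [hMsqeq n k]; ring
      _ ≤ _ := hk
  -- reindexing
  have hFsub : ∀ n : ℤ, Summable (fun k : ℤ => F (n - k) ^ 2) := by
    intro n
    have h := ((Equiv.subLeft n).summable_iff (f := fun m : ℤ => F m ^ 2)).mpr hF2
    exact h.congr fun k => by simp
  have hFsub_tsum : ∀ n : ℤ, ∑' k : ℤ, F (n - k) ^ 2 = ∑' m : ℤ, F m ^ 2 := by
    intro n
    rw [← (Equiv.subLeft n).tsum_eq (fun m : ℤ => F m ^ 2)]
    exact tsum_congr fun k => by simp
  have hWsub : ∀ n : ℤ, Summable (fun k : ℤ => (1 + |((n - k : ℤ):ℝ)|) ^ (-s)) := by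
    intro n
    have h := ((Equiv.subLeft n).summable_iff (f := fun m : ℤ => (1 + |(m:ℝ)|) ^ (-s))).mpr hWs
    exact h.congr fun k => by simp
  have hWsub_tsum : ∀ n : ℤ, ∑' k : ℤ, (1 + |((n - k : ℤ):ℝ)|) ^ (-s) = W := by
    intro n
    rw [hWdef, ← (Equiv.subLeft n).tsum_eq (fun m : ℤ => (1 + |(m:ℝ)|) ^ (-s))]
    exact tsum_congr fun k => by simp
  -- product summability for F,G
  have base : Summable (fun p : ℤ × ℤ => F p.1 ^ 2 * G p.2 ^ 2) :=
    hF2.mul_of_nonneg hG2 (fun m => sq_nonneg _) (fun k => sq_nonneg _)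
  have hprodFG : Summable (fun p : ℤ × ℤ => F (p.1 - p.2) ^ 2 * G p.2 ^ 2) := by
    have h := (shearSub.summable_iff (f := fun p : ℤ × ℤ => F p.1 ^ 2 * G p.2 ^ 2)).mpr base
    exact h.congr fun p => by simp
  have hFGrow : ∀ n : ℤ, Summable (fun k : ℤ => F (n - k) ^ 2 * G k ^ 2) :=
    fun n => ((summable_prod_of_nonneg
      (fun p => mul_nonneg (sq_nonneg _) (sq_nonneg _))).mp hprodFG).1 n
  have hH : Summable (fun n : ℤ => ∑' k : ℤ, F (n - k) ^ 2 * G k ^ 2) :=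
    ((summable_prod_of_nonneg
      (fun p => mul_nonneg (sq_nonneg _) (sq_nonneg _))).mp hprodFG).2
  have hH_tsum : ∑' n : ℤ, ∑' k : ℤ, F (n - k) ^ 2 * G k ^ 2 =
      (∑' m : ℤ, F m ^ 2) * (∑' k : ℤ, G k ^ 2) := by
    have e1 : ∑' p : ℤ × ℤ, F (p.1 - p.2) ^ 2 * G p.2 ^ 2 =
        ∑' n : ℤ, ∑' k : ℤ, F (n - k) ^ 2 * G k ^ 2 := Summable.tsum_prod' hprodFG hFGrow
    have e2 : ∑' p : ℤ × ℤ, F (p.1 - p.2) ^ 2 * G p.2 ^ 2 =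
        ∑' p : ℤ × ℤ, F p.1 ^ 2 * G p.2 ^ 2 := by
      rw [← shearSub.tsum_eq (fun p : ℤ × ℤ => F p.1 ^ 2 * G p.2 ^ 2)]
      exact tsum_congr fun p => by simp
    have e3 : ∑' p : ℤ × ℤ, F p.1 ^ 2 * G p.2 ^ 2 =
        (∑' m : ℤ, F m ^ 2) * (∑' k : ℤ, G k ^ 2) := by
      have h1 : ∑' p : ℤ × ℤ, F p.1 ^ 2 * G p.2 ^ 2 =
          ∑' (b : ℤ), ∑' (c : ℤ), F b ^ 2 * G c ^ 2 :=
        Summable.tsum_prod' base (fun b => hG2.mul_left (F b ^ 2))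
      rw [h1]
      calc ∑' (b : ℤ), ∑' (c : ℤ), F b ^ 2 * G c ^ 2
          = ∑' (b : ℤ), F b ^ 2 * ∑' (c : ℤ), G c ^ 2 := tsum_congr fun b => tsum_mul_left
        _ = (∑' m : ℤ, F m ^ 2) * (∑' k : ℤ, G k ^ 2) := tsum_mul_right
    rw [← e1, e2, e3]
  -- common per-n facts
  have common : ∀ n : ℤ, Summable (fun k : ℤ => M n k * (F (n - k) * G k)) →
      Summable (fun k : ℤ => ‖u (n - k) * v k‖) ∧
      (1 + |(n:ℝ)|) ^ α * ‖∑' k : ℤ, u (n - k) * v k‖ ≤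
        ∑' k : ℤ, M n k * (F (n - k) * G k) := by
    intro n hMFG
    have hne : ((1 + |(n:ℝ)|) ^ α) ≠ 0 := ne_of_gt (Real.rpow_pos_of_pos (hwpos n) α)
    have hnorm : Summable (fun k : ℤ => ‖u (n - k) * v k‖) := by
      have h := hMFG.mul_left (((1 + |(n:ℝ)|) ^ α)⁻¹)
      apply h.congr
      intro k
      rw [hId n k, inv_mul_cancel_left₀ hne, ← norm_mul]
    refine ⟨hnorm, ?_⟩
    calc (1 + |(n:ℝ)|) ^ α * ‖∑' k : ℤ, u (n - k) * v k‖
        ≤ (1 + |(n:ℝ)|) ^ α * ∑' k : ℤ, ‖u (n - k) * v k‖ :=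
          mul_le_mul_of_nonneg_left (norm_tsum_le_tsum_norm hnorm)
            (Real.rpow_nonneg (hwpos n).le α)
      _ = ∑' k : ℤ, (1 + |(n:ℝ)|) ^ α * ‖u (n - k) * v k‖ := tsum_mul_left.symm
      _ = ∑' k : ℤ, M n k * (F (n - k) * G k) := by
          refine tsum_congr fun k => ?_
          rw [hId n k, norm_mul]
  -- convert goal RHS sums
  have eF : ∑' n : ℤ, ((1 + |(n:ℝ)|) ^ σ * ‖u n‖) ^ 2 = ∑' m : ℤ, F m ^ 2 :=
    tsum_congr fun n => by simp only [hFdef]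
  have eG : ∑' n : ℤ, ((1 + |(n:ℝ)|) ^ α * ‖v n‖) ^ 2 = ∑' k : ℤ, G k ^ 2 :=
    tsum_congr fun n => by simp only [hGdef]
  rw [eF, eG]
  rcases le_or_gt 0 α with hα0 | hα0
  · -- case 0 ≤ α
    have hMrow : ∀ n : ℤ, Summable (fun k : ℤ => M n k ^ 2) := by
      intro n
      exact Summable.of_nonneg_of_le (fun k => sq_nonneg _) (fun k => hMsq_bound1 hα0 n k)
        ((hWs.add (hWsub n)).mul_left 2)
    have hMrow_tsum : ∀ n : ℤ, ∑' k : ℤ, M n k ^ 2 ≤ 4 * W := by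
      intro n
      calc ∑' k : ℤ, M n k ^ 2
          ≤ ∑' k : ℤ, 2 * ((1 + |(k:ℝ)|) ^ (-s) + (1 + |((n - k : ℤ):ℝ)|) ^ (-s)) :=
            Summable.tsum_le_tsum (fun k => hMsq_bound1 hα0 n k) (hMrow n)
              ((hWs.add (hWsub n)).mul_left 2)
        _ = 2 * (W + W) := by
            rw [tsum_mul_left, Summable.tsum_add hWs (hWsub n), hWsub_tsum n, ← hWdef]
        _ = 4 * W := by ring
    have key : ∀ n : ℤ, Summable (fun k : ℤ => M n k * (F (n - k) * G k)) ∧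
        ∑' k : ℤ, M n k * (F (n - k) * G k) ≤
          Real.sqrt (4 * W) * Real.sqrt (∑' k : ℤ, F (n - k) ^ 2 * G k ^ 2) := by
      intro n
      have hb2 : Summable (fun k : ℤ => (F (n - k) * G k) ^ 2) :=
        (hFGrow n).congr fun k => (mul_pow _ _ 2).symm
      obtain ⟨hab, hle⟩ := tsum_cs (a := fun k => M n k) (b := fun k => F (n - k) * G k)
        (hM0 n) (fun k => mul_nonneg (hF0 _) (hG0 _)) (hMrow n) hb2
      refine ⟨hab, hle.trans ?_⟩
      have r2 : (∑' k : ℤ, (F (n - k) * G k) ^ 2) = ∑' k : ℤ, F (n - k) ^ 2 * G k ^ 2 :=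
        tsum_congr fun k => mul_pow _ _ 2
      rw [r2]
      exact mul_le_mul_of_nonneg_right (Real.sqrt_le_sqrt (hMrow_tsum n)) (Real.sqrt_nonneg _)
    have hP2le : ∀ n : ℤ, ((1 + |(n:ℝ)|) ^ α * ‖∑' k : ℤ, u (n - k) * v k‖) ^ 2 ≤
        (4 * W) * ∑' k : ℤ, F (n - k) ^ 2 * G k ^ 2 := by
      intro n
      have h1 := ((common n (key n).1).2).trans (key n).2
      have hP0 : 0 ≤ (1 + |(n:ℝ)|) ^ α * ‖∑' k : ℤ, u (n - k) * v k‖ := by positivity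
      calc ((1 + |(n:ℝ)|) ^ α * ‖∑' k : ℤ, u (n - k) * v k‖) ^ 2
          ≤ (Real.sqrt (4 * W) * Real.sqrt (∑' k : ℤ, F (n - k) ^ 2 * G k ^ 2)) ^ 2 :=
            pow_le_pow_left₀ hP0 h1 2
        _ = (4 * W) * ∑' k : ℤ, F (n - k) ^ 2 * G k ^ 2 := by
            rw [mul_pow, Real.sq_sqrt (by linarith), Real.sq_sqrt (tsum_nonneg fun k =>
              mul_nonneg (sq_nonneg _) (sq_nonneg _))]
    have hPsum : Summable (fun n : ℤ =>
        ((1 + |(n:ℝ)|) ^ α * ‖∑' k : ℤ, u (n - k) * v k‖) ^ 2) :=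
      Summable.of_nonneg_of_le (fun n => sq_nonneg _) hP2le (hH.mul_left (4 * W))
    refine ⟨fun n => Summable.of_norm ((common n (key n).1).1), hPsum, ?_⟩
    have hfinal : ∑' n : ℤ, ((1 + |(n:ℝ)|) ^ α * ‖∑' k : ℤ, u (n - k) * v k‖) ^ 2 ≤
        (4 * W) * ((∑' m : ℤ, F m ^ 2) * (∑' k : ℤ, G k ^ 2)) := by
      calc ∑' n : ℤ, ((1 + |(n:ℝ)|) ^ α * ‖∑' k : ℤ, u (n - k) * v k‖) ^ 2
          ≤ ∑' n : ℤ, (4 * W) * ∑' k : ℤ, F (n - k) ^ 2 * G k ^ 2 :=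
            Summable.tsum_le_tsum hP2le hPsum (hH.mul_left (4 * W))
        _ = (4 * W) * ((∑' m : ℤ, F m ^ 2) * (∑' k : ℤ, G k ^ 2)) := by
            rw [tsum_mul_left, hH_tsum]
    calc Real.sqrt (∑' n : ℤ, ((1 + |(n:ℝ)|) ^ α * ‖∑' k : ℤ, u (n - k) * v k‖) ^ 2)
        ≤ Real.sqrt ((4 * W) * ((∑' m : ℤ, F m ^ 2) * (∑' k : ℤ, G k ^ 2))) :=
          Real.sqrt_le_sqrt hfinal
      _ = Real.sqrt (4 * W) * (Real.sqrt (∑' m : ℤ, F m ^ 2) * Real.sqrt (∑' k : ℤ, G k ^ 2)) := by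
          rw [Real.sqrt_mul (by linarith), Real.sqrt_mul hTF0]
      _ = Real.sqrt (4 * W) * Real.sqrt (∑' m : ℤ, F m ^ 2) * Real.sqrt (∑' k : ℤ, G k ^ 2) := by
          ring
  · -- case α < 0
    have hA : Summable (fun p : ℤ × ℤ => (1 + |(p.1 : ℝ)|) ^ (-s) * G p.2 ^ 2) :=
      hWs.mul_of_nonneg hG2 (fun m => Real.rpow_nonneg (hwpos m).le _) (fun k => sq_nonneg _)
    have hB : Summable (fun p : ℤ × ℤ => (1 + |((p.1 - p.2 : ℤ) : ℝ)|) ^ (-s) * G p.2 ^ 2) := by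
      have h := (shearSub.summable_iff
        (f := fun p : ℤ × ℤ => (1 + |(p.1:ℝ)|) ^ (-s) * G p.2 ^ 2)).mpr hA
      exact h.congr fun p => by simp
    have hMGpos : ∀ p : ℤ × ℤ, (0:ℝ) ≤ M p.1 p.2 ^ 2 * G p.2 ^ 2 :=
      fun p => mul_nonneg (sq_nonneg _) (sq_nonneg _)
    have hMGle : ∀ p : ℤ × ℤ, M p.1 p.2 ^ 2 * G p.2 ^ 2 ≤
        2 * ((1 + |(p.1:ℝ)|) ^ (-s) * G p.2 ^ 2 +
          (1 + |((p.1 - p.2 : ℤ):ℝ)|) ^ (-s) * G p.2 ^ 2) := by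
      intro p
      calc M p.1 p.2 ^ 2 * G p.2 ^ 2
          ≤ (2 * ((1 + |(p.1:ℝ)|) ^ (-s) + (1 + |((p.1 - p.2 : ℤ):ℝ)|) ^ (-s))) * G p.2 ^ 2 :=
            mul_le_mul_of_nonneg_right (hMsq_bound2 hα0 p.1 p.2) (sq_nonneg _)
        _ = 2 * ((1 + |(p.1:ℝ)|) ^ (-s) * G p.2 ^ 2 +
            (1 + |((p.1 - p.2 : ℤ):ℝ)|) ^ (-s) * G p.2 ^ 2) := by ring
    have hprodMG : Summable (fun p : ℤ × ℤ => M p.1 p.2 ^ 2 * G p.2 ^ 2) :=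
      Summable.of_nonneg_of_le hMGpos hMGle ((hA.add hB).mul_left 2)
    have hQrow : ∀ n : ℤ, Summable (fun k : ℤ => M n k ^ 2 * G k ^ 2) :=
      fun n => ((summable_prod_of_nonneg hMGpos).mp hprodMG).1 n
    have hQ : Summable (fun n : ℤ => ∑' k : ℤ, M n k ^ 2 * G k ^ 2) :=
      ((summable_prod_of_nonneg hMGpos).mp hprodMG).2
    have hQ0 : ∀ n : ℤ, (0:ℝ) ≤ ∑' k : ℤ, M n k ^ 2 * G k ^ 2 :=
      fun n => tsum_nonneg fun k => hMGpos (n, k)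
    have hA_tsum : ∑' p : ℤ × ℤ, (1 + |(p.1:ℝ)|) ^ (-s) * G p.2 ^ 2 =
        W * ∑' k : ℤ, G k ^ 2 := by
      have h1 : ∑' p : ℤ × ℤ, (1 + |(p.1:ℝ)|) ^ (-s) * G p.2 ^ 2 =
          ∑' (b : ℤ), ∑' (c : ℤ), (1 + |(b:ℝ)|) ^ (-s) * G c ^ 2 :=
        Summable.tsum_prod' hA (fun b => hG2.mul_left ((1 + |(b:ℝ)|) ^ (-s)))
      rw [h1]
      calc ∑' (b : ℤ), ∑' (c : ℤ), (1 + |(b:ℝ)|) ^ (-s) * G c ^ 2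
          = ∑' (b : ℤ), (1 + |(b:ℝ)|) ^ (-s) * ∑' (c : ℤ), G c ^ 2 :=
            tsum_congr fun b => tsum_mul_left
        _ = W * ∑' k : ℤ, G k ^ 2 := by rw [tsum_mul_right, ← hWdef]
    have hB_tsum : ∑' p : ℤ × ℤ, (1 + |((p.1 - p.2 : ℤ):ℝ)|) ^ (-s) * G p.2 ^ 2 =
        W * ∑' k : ℤ, G k ^ 2 := by
      rw [← hA_tsum, ← shearSub.tsum_eq (fun p : ℤ × ℤ => (1 + |(p.1:ℝ)|) ^ (-s) * G p.2 ^ 2)]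
      exact tsum_congr fun p => by simp
    have hQsum_le : ∑' n : ℤ, ∑' k : ℤ, M n k ^ 2 * G k ^ 2 ≤
        4 * W * ∑' k : ℤ, G k ^ 2 := by
      have h1 : ∑' p : ℤ × ℤ, M p.1 p.2 ^ 2 * G p.2 ^ 2 =
          ∑' n : ℤ, ∑' k : ℤ, M n k ^ 2 * G k ^ 2 := Summable.tsum_prod' hprodMG hQrow
      rw [← h1]
      calc ∑' p : ℤ × ℤ, M p.1 p.2 ^ 2 * G p.2 ^ 2
          ≤ ∑' p : ℤ × ℤ, 2 * ((1 + |(p.1:ℝ)|) ^ (-s) * G p.2 ^ 2 +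
              (1 + |((p.1 - p.2 : ℤ):ℝ)|) ^ (-s) * G p.2 ^ 2) :=
            Summable.tsum_le_tsum hMGle hprodMG ((hA.add hB).mul_left 2)
        _ = 2 * (W * ∑' k : ℤ, G k ^ 2 + W * ∑' k : ℤ, G k ^ 2) := by
            rw [tsum_mul_left, Summable.tsum_add hA hB, hA_tsum, hB_tsum]
        _ = 4 * W * ∑' k : ℤ, G k ^ 2 := by ring
    have key : ∀ n : ℤ, Summable (fun k : ℤ => M n k * (F (n - k) * G k)) ∧
        ∑' k : ℤ, M n k * (F (n - k) * G k) ≤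
          Real.sqrt (∑' k : ℤ, M n k ^ 2 * G k ^ 2) * Real.sqrt (∑' m : ℤ, F m ^ 2) := by
      intro n
      have ha2 : Summable (fun k : ℤ => (M n k * G k) ^ 2) :=
        (hQrow n).congr fun k => (mul_pow _ _ 2).symm
      obtain ⟨hab, hle⟩ := tsum_cs (a := fun k => M n k * G k) (b := fun k => F (n - k))
        (fun k => mul_nonneg (hM0 n k) (hG0 k)) (fun k => hF0 _) ha2 (hFsub n)
      constructor
      · exact hab.congr fun k => by ring
      · have e1 : ∑' k : ℤ, M n k * (F (n - k) * G k) =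
            ∑' k : ℤ, (M n k * G k) * F (n - k) := tsum_congr fun k => by ring
        have e2 : ∑' k : ℤ, (M n k * G k) ^ 2 = ∑' k : ℤ, M n k ^ 2 * G k ^ 2 :=
          tsum_congr fun k => mul_pow _ _ 2
        rw [e1, ← e2, ← hFsub_tsum n]
        exact hle
    have hP2le : ∀ n : ℤ, ((1 + |(n:ℝ)|) ^ α * ‖∑' k : ℤ, u (n - k) * v k‖) ^ 2 ≤
        (∑' k : ℤ, M n k ^ 2 * G k ^ 2) * (∑' m : ℤ, F m ^ 2) := by
      intro n
      have h1 := ((common n (key n).1).2).trans (key n).2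
      have hP0 : 0 ≤ (1 + |(n:ℝ)|) ^ α * ‖∑' k : ℤ, u (n - k) * v k‖ := by positivity
      calc ((1 + |(n:ℝ)|) ^ α * ‖∑' k : ℤ, u (n - k) * v k‖) ^ 2
          ≤ (Real.sqrt (∑' k : ℤ, M n k ^ 2 * G k ^ 2) * Real.sqrt (∑' m : ℤ, F m ^ 2)) ^ 2 :=
            pow_le_pow_left₀ hP0 h1 2
        _ = (∑' k : ℤ, M n k ^ 2 * G k ^ 2) * (∑' m : ℤ, F m ^ 2) := by
            rw [mul_pow, Real.sq_sqrt (hQ0 n), Real.sq_sqrt hTF0]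
    have hPsum : Summable (fun n : ℤ =>
        ((1 + |(n:ℝ)|) ^ α * ‖∑' k : ℤ, u (n - k) * v k‖) ^ 2) :=
      Summable.of_nonneg_of_le (fun n => sq_nonneg _) hP2le (hQ.mul_right (∑' m : ℤ, F m ^ 2))
    refine ⟨fun n => Summable.of_norm ((common n (key n).1).1), hPsum, ?_⟩
    have hfinal : ∑' n : ℤ, ((1 + |(n:ℝ)|) ^ α * ‖∑' k : ℤ, u (n - k) * v k‖) ^ 2 ≤
        (4 * W) * ((∑' m : ℤ, F m ^ 2) * (∑' k : ℤ, G k ^ 2)) := by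
      calc ∑' n : ℤ, ((1 + |(n:ℝ)|) ^ α * ‖∑' k : ℤ, u (n - k) * v k‖) ^ 2
          ≤ ∑' n : ℤ, (∑' k : ℤ, M n k ^ 2 * G k ^ 2) * (∑' m : ℤ, F m ^ 2) :=
            Summable.tsum_le_tsum hP2le hPsum (hQ.mul_right (∑' m : ℤ, F m ^ 2))
        _ = (∑' n : ℤ, ∑' k : ℤ, M n k ^ 2 * G k ^ 2) * (∑' m : ℤ, F m ^ 2) := tsum_mul_right
        _ ≤ (4 * W * ∑' k : ℤ, G k ^ 2) * (∑' m : ℤ, F m ^ 2) :=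
            mul_le_mul_of_nonneg_right hQsum_le hTF0
        _ = (4 * W) * ((∑' m : ℤ, F m ^ 2) * (∑' k : ℤ, G k ^ 2)) := by ring
    calc Real.sqrt (∑' n : ℤ, ((1 + |(n:ℝ)|) ^ α * ‖∑' k : ℤ, u (n - k) * v k‖) ^ 2)
        ≤ Real.sqrt ((4 * W) * ((∑' m : ℤ, F m ^ 2) * (∑' k : ℤ, G k ^ 2))) :=
          Real.sqrt_le_sqrt hfinal
      _ = Real.sqrt (4 * W) * (Real.sqrt (∑' m : ℤ, F m ^ 2) * Real.sqrt (∑' k : ℤ, G k ^ 2)) := by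
          rw [Real.sqrt_mul (by linarith), Real.sqrt_mul hTF0]
      _ = Real.sqrt (4 * W) * Real.sqrt (∑' m : ℤ, F m ^ 2) * Real.sqrt (∑' k : ℤ, G k ^ 2) := by
          ring
end
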